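/- arXiv:2411.06043 — 8 statements merged into one kernel-verified Lean document; each statement's English description precedes it below -/
import Mathlib

section
/- For any partial function f : ℕ →. ℕ, f is subTuring equivalent to its graph function G_f : ℕ →. Bool, where G_f(⟨n,m⟩) = 1 if f(n)↓ = m, G_f(⟨n,m⟩) = 0 if f(n)↓ ≠ m, and G_f(⟨n,m⟩)↑ if f(n)↑. -/
open Classical

noncomputable section

/-- `as` is a valid answer history for the sequential oracle computation of `Φ`
with oracle `g` on input `n`: at each round `k`, the machine outputs a query
`(false, q)` with `q` in the domain of `g`, answered by `g q = as[k]`. -/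
def ValidHist (Φ : List ℕ →. Bool × ℕ) (g : ℕ →. ℕ) (n : ℕ) (as : List ℕ) : Prop :=
  ∀ (k : ℕ) (hk : k < as.length), ∃ q : ℕ,
    (false, q) ∈ Φ (n :: as.take k) ∧ (as[k]'hk) ∈ g q

/-- The sequential oracle computation `Φ[g](n)` halts with output `m`. -/
def HaltsTo (Φ : List ℕ →. Bool × ℕ) (g : ℕ →. ℕ) (n m : ℕ) : Prop :=
  ∃ as : List ℕ, ValidHist Φ g n as ∧ (true, m) ∈ Φ (n :: as)

/-- subTuring reducibility: `f ⊆ Φ[g]` for some partial computable `Φ`. -/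
def SubTuringLE (f g : ℕ →. ℕ) : Prop :=
  ∃ Φ : List ℕ →. Bool × ℕ, Partrec Φ ∧ ∀ n m, m ∈ f n → HaltsTo Φ g n m

/-- subTuring equivalence. -/
def SubTuringEquiv (f g : ℕ →. ℕ) : Prop := SubTuringLE f g ∧ SubTuringLE g f

/-- The graph function of `f`: `G_f(⟨n,m⟩) = 1` if `f(n)↓ = m`,
`0` if `f(n)↓ ≠ m`, and undefined if `f(n)↑`. -/
def GraphFn (f : ℕ →. ℕ) : ℕ →. ℕ := fun p =>
  (f p.unpair.1).map fun v => if v = p.unpair.2 then 1 else 0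

/-! With oracle `G_f`, compute `f(n)` by querying `⟨n,0⟩, ⟨n,1⟩, …` until the answer `1`
comes back; if `f(n)↓ = m` this happens exactly at the query `⟨n,m⟩`. Conversely, with
oracle `f`, compute `G_f(⟨n,m⟩)` by a single query `n` and a comparison of the answer
with `m`. Both machines are total and primitive recursive. -/

theorem SubTuringLE.of_computable {f g : ℕ →. ℕ} {Φ : List ℕ → Bool × ℕ} (hΦ : Computable Φ)
    (h : ∀ n m, m ∈ f n → ∃ as : List ℕ,
      (∀ (k : ℕ) (hk : k < as.length), ∃ q, Φ (n :: as.take k) = (false, q) ∧ as[k] ∈ g q) ∧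
        Φ (n :: as) = (true, m)) :
    SubTuringLE f g := by
  refine ⟨fun l => Part.some (Φ l), hΦ.partrec, fun n m hm => ?_⟩
  obtain ⟨as, hvalid, hhalt⟩ := h n m hm
  refine ⟨as, fun k hk => ?_, by simp [hhalt]⟩
  obtain ⟨q, hq, hans⟩ := hvalid k hk
  exact ⟨q, by simp [hq], hans⟩

theorem mem_graphFn_pair {f : ℕ →. ℕ} {n m : ℕ} (hm : m ∈ f n) (k : ℕ) :
    (if m = k then 1 else 0) ∈ GraphFn f (Nat.pair n k) := by
  simp only [GraphFn, Nat.unpair_pair]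
  exact Part.mem_map _ hm

/-- On `n :: as`, the last answer in `as` being `1` means the previous query `⟨n, #as - 1⟩`
hit the value of `f(n)`. -/
def graphSearchMachine (l : List ℕ) : Bool × ℕ :=
  if l.tail.reverse.head? = some 1 then (true, l.tail.length - 1)
  else (false, Nat.pair l.headI l.tail.length)

theorem primrec_graphSearchMachine : Primrec graphSearchMachine :=
  Primrec.ite
    (Primrec.eq.comp (Primrec.list_head?.comp (Primrec.list_reverse.comp Primrec.list_tail))
      (Primrec.const (some 1)))
    ((Primrec.const true).pair
      (Primrec.nat_sub.comp (Primrec.list_length.comp Primrec.list_tail) (Primrec.const 1)))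
    ((Primrec.const false).pair
      (Primrec₂.natPair.comp Primrec.list_headI (Primrec.list_length.comp Primrec.list_tail)))

theorem graphSearchMachine_replicate (n k : ℕ) :
    graphSearchMachine (n :: List.replicate k 0) = (false, Nat.pair n k) := by
  cases k <;> simp [graphSearchMachine, List.replicate_succ']

theorem graphSearchMachine_replicate_append (n m : ℕ) :
    graphSearchMachine (n :: (List.replicate m 0 ++ [1])) = (true, m) := by
  simp [graphSearchMachine]

theorem getElem_replicate_append_singleton {m k : ℕ}
    (hk : k < (List.replicate m 0 ++ [1]).length) :
    (List.replicate m 0 ++ [1])[k] = if m = k then 1 else 0 := by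
  rcases lt_or_eq_of_le (show k ≤ m by simpa [Nat.lt_succ_iff] using hk) with hlt | rfl
  · rw [List.getElem_append_left (by simpa using hlt)]
    simp [hlt.ne']
  · simp

theorem SubTuringLE.self_graphFn (f : ℕ →. ℕ) : SubTuringLE f (GraphFn f) := by
  refine .of_computable primrec_graphSearchMachine.to_comp fun n m hm =>
    ⟨List.replicate m 0 ++ [1], fun k hk => ⟨Nat.pair n k, ?_, ?_⟩,
      graphSearchMachine_replicate_append n m⟩
  · have hkm : k ≤ m := by simpa [Nat.lt_succ_iff] using hk
    rw [List.take_append_of_le_length (by simpa using hkm), List.take_replicate,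
      min_eq_left hkm, graphSearchMachine_replicate]
  · rw [getElem_replicate_append_singleton]
    exact mem_graphFn_pair hm k

def graphLookupMachine (l : List ℕ) : Bool × ℕ :=
  if l.tail = [] then (false, l.headI.unpair.1)
  else (true, if l.tail.headI = l.headI.unpair.2 then 1 else 0)

theorem primrec_graphLookupMachine : Primrec graphLookupMachine :=
  Primrec.ite (Primrec.eq.comp Primrec.list_tail (Primrec.const []))
    ((Primrec.const false).pair ((Primrec.fst.comp Primrec.unpair).comp Primrec.list_headI))
    ((Primrec.const true).pair
      (Primrec.ite
        (Primrec.eq.comp (Primrec.list_headI.comp Primrec.list_tail)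
          ((Primrec.snd.comp Primrec.unpair).comp Primrec.list_headI))
        (Primrec.const 1) (Primrec.const 0)))

theorem SubTuringLE.graphFn_self (f : ℕ →. ℕ) : SubTuringLE (GraphFn f) f := by
  refine .of_computable primrec_graphLookupMachine.to_comp fun p b hb => ?_
  obtain ⟨v, hv, rfl⟩ := Part.mem_map_iff _ |>.mp hb
  refine ⟨[v], fun k hk => ?_, rfl⟩
  obtain rfl : k = 0 := by simpa using hk
  exact ⟨p.unpair.1, by simp [graphLookupMachine], hv⟩

theorem graph_subTuring_equiv (f : ℕ →. ℕ) : SubTuringEquiv f (GraphFn f) :=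
  ⟨.self_graphFn f, .graphFn_self f⟩
end
end

section
/- SubTuring reducibility is transitive: if f ≤subT g and g ≤subT h, then f ≤subT h. -/
open Classical

noncomputable section

/-!
To compute `f` from `h`, run `Φ₁` and answer each of its `g`-queries `q` by running `Φ₂` on `q`,
passing the `h`-queries of `Φ₂` on to the oracle. A sequential machine is handed its oracle answers
as the list following its input, so the composed machine reads these `h`-answers one at a time;
when they run out, the pending `h`-query of `Φ₂` is its next query. Along a halting computation of
`Φ₁[g]`, the `h`-histories of the inner runs of `Φ₂` then concatenate to a valid `h`-history of
the composed machine, at the end of which it halts with the output of `Φ₁`.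
-/

theorem validHist_concat {Φ : List ℕ →. Bool × ℕ} {g : ℕ →. ℕ} {n a : ℕ} {as : List ℕ} :
    ValidHist Φ g n (as ++ [a]) ↔
      ValidHist Φ g n as ∧ ∃ q, (false, q) ∈ Φ (n :: as) ∧ a ∈ g q := by
  constructor
  · intro hv
    refine ⟨fun k hk => ?_, ?_⟩
    · obtain ⟨q, hq, hgq⟩ := hv k (by simp; omega)
      rw [List.take_append_of_le_length hk.le] at hq
      rw [List.getElem_append_left hk] at hgq
      exact ⟨q, hq, hgq⟩
    · obtain ⟨q, hq, hgq⟩ := hv as.length (by simp)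
      exact ⟨q, by simpa using hq, by simpa using hgq⟩
  · rintro ⟨hv, q, hq, hgq⟩ k hk
    rcases Nat.lt_or_ge k as.length with hlt | hge
    · obtain ⟨r, hr, hgr⟩ := hv k hlt
      refine ⟨r, ?_, ?_⟩
      · rwa [List.take_append_of_le_length hlt.le]
      · rwa [List.getElem_append_left hlt]
    · obtain rfl : k = as.length := by simp at hk; omega
      exact ⟨q, by simpa using hq, by simpa using hgq⟩

namespace SubTuringLE

/-- Either `Φ₁` runs on `n :: as`, or `Φ₂` runs on `q :: cs` to answer the `g`-query `q` that
`Φ₁` asked on the suspended list `n :: as`. A state of the composed machine is a phase together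
with the `h`-answers not yet read. -/
abbrev Phase : Type := List ℕ ⊕ List ℕ × List ℕ

def next : Phase × List ℕ → Bool × ℕ → (Bool × ℕ) ⊕ (Phase × List ℕ)
  | (.inl _, _), (true, m) => .inl (true, m)
  | (.inl L₁, t), (false, q) => .inr (.inr (L₁, [q]), t)
  | (.inr (L₁, _), t), (true, a) => .inr (.inl (L₁ ++ [a]), t)
  | (.inr _, []), (false, r) => .inl (false, r)
  | (.inr (L₁, L₂), b :: t), (false, _) => .inr (.inr (L₁, L₂ ++ [b]), t)

def step (Φ₁ Φ₂ : List ℕ →. Bool × ℕ) : Phase × List ℕ →. (Bool × ℕ) ⊕ (Phase × List ℕ) :=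
  fun s => (Sum.elim Φ₁ (fun L => Φ₂ L.2) s.1).map (next s)

def compose (Φ₁ Φ₂ : List ℕ →. Bool × ℕ) (l : List ℕ) : Part (Bool × ℕ) :=
  (step Φ₁ Φ₂).fix (.inl [l.headI], l.tail)

theorem primrec₂_next : Primrec₂ next := by
  open Primrec in
  refine (sumCasesOn (fst.comp fst)
    (g := fun x (L₁ : List ℕ) => bif x.2.1 then .inl x.2 else .inr (.inr (L₁, [x.2.2]), x.1.2))
    (h := fun x (L : List ℕ × List ℕ) => bif x.2.1 then .inr (.inl (L.1 ++ [x.2.2]), x.1.2) else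
      List.casesOn x.1.2 (.inl x.2) fun b t => .inr (.inr (L.1, L.2 ++ [b]), t))
    ?_ ?_).of_eq ?_
  · exact cond (fst.comp (snd.comp fst)) (sumInl.comp (snd.comp fst))
      (sumInr.comp (pair (sumInr.comp (pair snd (list_cons.comp (snd.comp (snd.comp fst))
        (const [])))) (snd.comp (fst.comp fst))))
  · exact cond (fst.comp (snd.comp fst))
      (sumInr.comp (pair (sumInl.comp (list_concat.comp (fst.comp snd) (snd.comp (snd.comp fst))))
        (snd.comp (fst.comp fst))))
      (list_casesOn (snd.comp (fst.comp fst)) (sumInl.comp (snd.comp fst))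
        (sumInr.comp (pair (sumInr.comp (pair (fst.comp (snd.comp fst))
          (list_concat.comp (snd.comp (snd.comp fst)) (fst.comp snd)))) (snd.comp snd))).to₂)
  · rintro ⟨⟨_ | ⟨L₁, L₂⟩, _ | ⟨b, t⟩⟩, _ | _, v⟩ <;> rfl

variable {Φ₁ Φ₂ : List ℕ →. Bool × ℕ}

theorem partrec_step (h₁ : Partrec Φ₁) (h₂ : Partrec Φ₂) : Partrec (step Φ₁ Φ₂) :=
  (Partrec.sumCasesOn Computable.fst (h₁.comp Computable.snd).to₂
    (h₂.comp (Computable.snd.comp Computable.snd)).to₂).map primrec₂_next.to_comp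

theorem partrec_compose (h₁ : Partrec Φ₁) (h₂ : Partrec Φ₂) : Partrec (compose Φ₁ Φ₂) :=
  (partrec_step h₁ h₂).fix.comp <| (Computable.sumInl.comp <|
    Computable.list_cons.comp Primrec.list_headI.to_comp (Computable.const [])).pair
      Primrec.list_tail.to_comp

variable {h : ℕ →. ℕ} {n : ℕ}

/-- After reading the `h`-answers `bs`, the composed machine on input `n` is in phase `c`,
whatever answers follow. -/
def Reaches (Φ₁ Φ₂ : List ℕ →. Bool × ℕ) (h : ℕ →. ℕ) (n : ℕ) (bs : List ℕ) (c : Phase) :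
    Prop :=
  ValidHist (compose Φ₁ Φ₂) h n bs ∧
    ∀ t, (step Φ₁ Φ₂).fix (.inl [n], bs ++ t) = (step Φ₁ Φ₂).fix (c, t)

theorem reaches_nil : Reaches Φ₁ Φ₂ h n [] (.inl [n]) :=
  ⟨fun _ hk => absurd hk (Nat.not_lt_zero _), fun _ => rfl⟩

namespace Reaches

variable {bs : List ℕ} {c : Phase}

theorem compose_eq (hr : Reaches Φ₁ Φ₂ h n bs c) :
    compose Φ₁ Φ₂ (n :: bs) = (step Φ₁ Φ₂).fix (c, []) := by
  have := hr.2 []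
  rwa [List.append_nil] at this

theorem of_step {c' : Phase} (hr : Reaches Φ₁ Φ₂ h n bs c)
    (hc : ∀ t, .inr (c', t) ∈ step Φ₁ Φ₂ (c, t)) : Reaches Φ₁ Φ₂ h n bs c' :=
  ⟨hr.1, fun t => (hr.2 t).trans (PFun.fix_fwd_eq (hc t))⟩

theorem outer_query {L₁ : List ℕ} {q : ℕ} (hr : Reaches Φ₁ Φ₂ h n bs (.inl L₁))
    (hq : (false, q) ∈ Φ₁ L₁) : Reaches Φ₁ Φ₂ h n bs (.inr (L₁, [q])) :=
  hr.of_step fun t => Part.mem_map (next (.inl L₁, t)) hq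

theorem inner_halt {L₁ L₂ : List ℕ} {a : ℕ} (hr : Reaches Φ₁ Φ₂ h n bs (.inr (L₁, L₂)))
    (ha : (true, a) ∈ Φ₂ L₂) : Reaches Φ₁ Φ₂ h n bs (.inl (L₁ ++ [a])) :=
  hr.of_step fun t => Part.mem_map (next (.inr (L₁, L₂), t)) ha

theorem inner_query {L₁ L₂ : List ℕ} {r b : ℕ} (hr : Reaches Φ₁ Φ₂ h n bs (.inr (L₁, L₂)))
    (hq : (false, r) ∈ Φ₂ L₂) (hb : b ∈ h r) :
    Reaches Φ₁ Φ₂ h n (bs ++ [b]) (.inr (L₁, L₂ ++ [b])) := by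
  refine ⟨validHist_concat.2 ⟨hr.1, r, ?_, hb⟩, fun t => ?_⟩
  · rw [hr.compose_eq]
    exact PFun.fix_stop (Part.mem_map (next (.inr (L₁, L₂), [])) hq)
  · rw [List.append_assoc, List.singleton_append, hr.2]
    exact PFun.fix_fwd_eq (Part.mem_map (next (.inr (L₁, L₂), b :: t)) hq)

theorem inner_run {L₁ : List ℕ} {q : ℕ} {cs : List ℕ}
    (hr : Reaches Φ₁ Φ₂ h n bs (.inr (L₁, [q]))) (hv : ValidHist Φ₂ h q cs) :
    Reaches Φ₁ Φ₂ h n (bs ++ cs) (.inr (L₁, q :: cs)) := by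
  induction cs using List.reverseRecOn with
  | nil => simpa using hr
  | append_singleton cs b ih =>
    obtain ⟨hv, r, hq, hb⟩ := validHist_concat.1 hv
    simpa using (ih hv).inner_query hq hb

theorem haltsTo {L₁ : List ℕ} {m : ℕ} (hr : Reaches Φ₁ Φ₂ h n bs (.inl L₁))
    (hm : (true, m) ∈ Φ₁ L₁) : HaltsTo (compose Φ₁ Φ₂) h n m :=
  ⟨bs, hr.1, hr.compose_eq ▸ PFun.fix_stop (Part.mem_map (next (.inl L₁, [])) hm)⟩

end Reaches

theorem exists_reaches_of_validHist {g : ℕ →. ℕ} (hgh : ∀ q a, a ∈ g q → HaltsTo Φ₂ h q a)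
    {as : List ℕ} (hv : ValidHist Φ₁ g n as) : ∃ bs, Reaches Φ₁ Φ₂ h n bs (.inl (n :: as)) := by
  induction as using List.reverseRecOn with
  | nil => exact ⟨[], reaches_nil⟩
  | append_singleton as a ih =>
    obtain ⟨hv, q, hq, ha⟩ := validHist_concat.1 hv
    obtain ⟨bs, hbs⟩ := ih hv
    obtain ⟨cs, hcs, hhalt⟩ := hgh q a ha
    exact ⟨bs ++ cs, ((hbs.outer_query hq).inner_run hcs).inner_halt hhalt⟩

end SubTuringLE

theorem subTuringLE_trans (f g h : ℕ →. ℕ)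
    (hfg : SubTuringLE f g) (hgh : SubTuringLE g h) : SubTuringLE f h := by
  obtain ⟨Φ₁, hΦ₁, H₁⟩ := hfg
  obtain ⟨Φ₂, hΦ₂, H₂⟩ := hgh
  refine ⟨SubTuringLE.compose Φ₁ Φ₂, SubTuringLE.partrec_compose hΦ₁ hΦ₂, fun n m hm => ?_⟩
  obtain ⟨as, hv, hhalt⟩ := H₁ n m hm
  obtain ⟨bs, hbs⟩ := SubTuringLE.exists_reaches_of_validHist H₂ hv
  exact hbs.haltsTo hhalt
end
end

section
/- A partial function f : ℕ →. ℕ satisfies f ≤subT g for all partial functions g if and only if f has a partial computable extension. Hence the least subTuring degree consists exactly of the partial functions extending to partial computable functions. -/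
open Classical

noncomputable section

/-!
Relative to the nowhere-defined oracle no query is ever answered, so `Φ[∅](n)` halts with
output `m` exactly when `Φ` halts on the empty history `[n]`; this is partial computable in `n`.
Conversely a partial computable extension `p` of `f` is the oracle machine that ignores its
oracle and halts at once with output `p n`, and it reduces `f` to every `g`.
-/

section OracleMachines

variable (Φ : List ℕ →. Bool × ℕ) (g : ℕ →. ℕ) (n m : ℕ)

theorem validHist_nil : ValidHist Φ g n [] :=
  fun _ hk => absurd hk (Nat.not_lt_zero _)

theorem validHist_none_iff (as : List ℕ) :
    ValidHist Φ (fun _ => Part.none) n as ↔ as = [] := by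
  refine ⟨fun hv => ?_, fun h => h ▸ validHist_nil Φ _ n⟩
  rcases as with _ | ⟨a, as⟩
  · rfl
  · obtain ⟨q, -, hq⟩ := hv 0 (Nat.succ_pos _)
    exact absurd hq (Part.notMem_none _)

theorem haltsTo_none_iff : HaltsTo Φ (fun _ => Part.none) n m ↔ (true, m) ∈ Φ [n] := by
  simp only [HaltsTo, validHist_none_iff, exists_eq_left]

theorem haltsTo_of_mem_nil {Φ g n m} (h : (true, m) ∈ Φ [n]) : HaltsTo Φ g n m :=
  ⟨[], validHist_nil Φ g n, h⟩

def immediateOutput : ℕ →. ℕ :=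
  fun n => (Φ [n]).bind fun x => Part.ofOption (bif x.1 then some x.2 else none)

theorem mem_immediateOutput_iff : m ∈ immediateOutput Φ n ↔ (true, m) ∈ Φ [n] := by
  simp only [immediateOutput, Part.mem_bind_iff, Part.mem_ofOption]
  constructor
  · rintro ⟨⟨_ | _, k⟩, hx, h⟩ <;> simp_all
  · exact fun h => ⟨(true, m), h, rfl⟩

theorem Partrec.immediateOutput {Φ} (hΦ : Partrec Φ) : Partrec (immediateOutput Φ) :=
  (hΦ.comp (Primrec.list_cons.comp .id (Primrec.const [])).to_comp).bind <|
    Computable.ofOption <| Computable.cond (Computable.fst.comp .snd)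
      (Computable.option_some.comp (Computable.snd.comp .snd)) (Computable.const Option.none)

def haltWith (p : ℕ →. ℕ) : List ℕ →. Bool × ℕ :=
  fun l => (p l.headI).map (Prod.mk true)

theorem Partrec.haltWith {p : ℕ →. ℕ} (hp : Partrec p) : Partrec (haltWith p) :=
  (hp.comp Primrec.list_headI.to_comp).map
    (Computable.pair (Computable.const true) Computable.snd).to₂

theorem haltsTo_haltWith {p : ℕ →. ℕ} (h : m ∈ p n) : HaltsTo (haltWith p) g n m :=
  haltsTo_of_mem_nil <| (Part.mem_map_iff _).mpr ⟨m, h, rfl⟩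

end OracleMachines

theorem exists_partrec_extension_of_subTuringLE_none {f : ℕ →. ℕ}
    (h : SubTuringLE f (fun _ => Part.none)) :
    ∃ p : ℕ →. ℕ, Partrec p ∧ ∀ n m, m ∈ f n → m ∈ p n := by
  obtain ⟨Φ, hΦ, hf⟩ := h
  refine ⟨immediateOutput Φ, hΦ.immediateOutput, fun n m hm => ?_⟩
  exact (mem_immediateOutput_iff Φ n m).mpr ((haltsTo_none_iff Φ n m).mp (hf n m hm))

theorem subTuringLE_of_partrec_extension {f p : ℕ →. ℕ} (hp : Partrec p)
    (hf : ∀ n m, m ∈ f n → m ∈ p n) (g : ℕ →. ℕ) : SubTuringLE f g :=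
  ⟨haltWith p, hp.haltWith, fun n m hm => haltsTo_haltWith g n m (hf n m hm)⟩

theorem subTuring_least_degree (f : ℕ →. ℕ) :
    (∀ g : ℕ →. ℕ, SubTuringLE f g) ↔
      (∃ p : ℕ →. ℕ, Partrec p ∧ ∀ n m, m ∈ f n → m ∈ p n) :=
  ⟨fun h => exists_partrec_extension_of_subTuringLE_none (h _),
    fun ⟨_, hp, hf⟩ => subTuringLE_of_partrec_extension hp hf⟩
end
end

section
/- Define the meet f ∩ g by (f ∩ g)(⟨d,e,n⟩) = the common value of Φ_d[f](n) and Φ_e[g](n) when both converge and are equal, undefined otherwise. Then f ∩ g is a greatest lower bound of f and g with respect to ≤subT: f ∩ g ≤subT f, f ∩ g ≤subT g, and for any h with h ≤subT f and h ≤subT g we have h ≤subT f ∩ g. Hence the subTuring degrees form a lattice. -/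
open Classical

noncomputable section

/-- The `e`-th partial computable function `List ℕ →. Bool × ℕ`,
obtained from the `e`-th partial recursive code. -/
def phi (e : ℕ) : List ℕ →. Bool × ℕ := fun l =>
  ((Denumerable.ofNat Nat.Partrec.Code e).eval (Encodable.encode l)).bind fun k =>
    Part.ofOption (Encodable.decode (α := Bool × ℕ) k)

/-- The meet `f ∩ g`: on input `⟨d, e, n⟩` it takes the common value of
`Φ_d[f](n)` and `Φ_e[g](n)` when both converge and agree; undefined otherwise. -/
def PMeet (f g : ℕ →. ℕ) : ℕ →. ℕ := fun p =>
  ⟨∃ m, HaltsTo (phi p.unpair.1) f p.unpair.2.unpair.2 m ∧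
        HaltsTo (phi p.unpair.2.unpair.1) g p.unpair.2.unpair.2 m,
   fun h => Classical.choose h⟩

/-!
A value of `f ∩ g` at `⟨d, e, n⟩` is an output of `Φ_d[f](n)`, so `f ∩ g` reduces to `f`
uniformly by running `Φ_d` on `n`, and to `g` by running `Φ_e`. Conversely, if `h ≤subT f`
via `Φ_d` and `h ≤subT g` via `Φ_e`, then `h(n)` is found with the single query `⟨d, e, n⟩`
to `f ∩ g`; the answer is the right one because sequential oracle computations are
deterministic, so the value `m` shared by `Φ_d[f](n)` and `Φ_e[g](n)` is the value `f ∩ g`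
picks.
-/

theorem phi_partrec₂ : Partrec₂ phi :=
  (Nat.Partrec.Code.eval_part.comp ((Computable.ofNat _).comp Computable.fst)
      (Computable.encode.comp Computable.snd)).bind
    (Computable.ofOption ((Computable.decode (α := Bool × ℕ)).comp Computable.snd)).to₂

theorem exists_phi_eq {Φ : List ℕ →. Bool × ℕ} (hΦ : Partrec Φ) : ∃ e, phi e = Φ := by
  obtain ⟨c, hc⟩ := Nat.Partrec.Code.exists_code.1 hΦ
  refine ⟨Encodable.encode c, funext fun l => ?_⟩
  simp only [phi, Denumerable.ofNat_encode, hc, Encodable.encodek, Part.coe_some, Part.bind_some,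
    Part.bind_map, Part.bind_some_right]

namespace ValidHist

variable {Φ : List ℕ →. Bool × ℕ} {g : ℕ →. ℕ} {n : ℕ} {as bs : List ℕ}

theorem take_eq (ha : ValidHist Φ g n as) (hb : ValidHist Φ g n bs) :
    ∀ k ≤ as.length, k ≤ bs.length → as.take k = bs.take k
  | 0, _, _ => by simp
  | k + 1, hka, hkb => by
    have ih := take_eq ha hb k (by omega) (by omega)
    obtain ⟨q, hq, haq⟩ := ha k (by omega)
    obtain ⟨r, hr, hbr⟩ := hb k (by omega)
    rw [ih] at hq
    obtain rfl : q = r := by simpa using Part.mem_unique hq hr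
    rw [List.take_succ_eq_append_getElem (by omega), List.take_succ_eq_append_getElem (by omega),
      ih, Part.mem_unique haq hbr]

theorem length_le_of_halts (ha : ValidHist Φ g n as) (hb : ValidHist Φ g n bs) {m : ℕ}
    (hm : (true, m) ∈ Φ (n :: as)) : bs.length ≤ as.length := by
  by_contra! hlt
  obtain ⟨q, hq, -⟩ := hb as.length hlt
  rw [hb.take_eq ha as.length hlt.le le_rfl, List.take_length] at hq
  simpa using Part.mem_unique hm hq

end ValidHist

theorem HaltsTo.unique {Φ : List ℕ →. Bool × ℕ} {g : ℕ →. ℕ} {n m₁ m₂ : ℕ}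
    (h₁ : HaltsTo Φ g n m₁) (h₂ : HaltsTo Φ g n m₂) : m₁ = m₂ := by
  obtain ⟨as, ha, hm₁⟩ := h₁
  obtain ⟨bs, hb, hm₂⟩ := h₂
  have hlen := (hb.length_le_of_halts ha hm₂).antisymm (ha.length_le_of_halts hb hm₁)
  obtain rfl : as = bs := by
    have h := ha.take_eq hb as.length le_rfl hlen.le
    rwa [List.take_length, hlen, List.take_length] at h
  simpa using Part.mem_unique hm₁ hm₂

theorem SubTuringLE.of_haltsTo_phi {f g : ℕ →. ℕ} {idx arg : ℕ → ℕ}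
    (hidx : Computable idx) (harg : Computable arg)
    (H : ∀ n m, m ∈ f n → HaltsTo (phi (idx n)) g (arg n) m) : SubTuringLE f g :=
  ⟨fun l => phi (idx l.headI) (arg l.headI :: l.tail),
    phi_partrec₂.comp (hidx.comp Primrec.list_headI.to_comp)
      (Computable.list_cons.comp (harg.comp Primrec.list_headI.to_comp)
        Primrec.list_tail.to_comp),
    H⟩

def queryOnce (q : ℕ → ℕ) : List ℕ →. Bool × ℕ := fun l =>
  Part.some (l.tail.head?.casesOn (false, q l.headI) fun a => (true, a))

theorem SubTuringLE.of_mem_comp {f g : ℕ →. ℕ} {q : ℕ → ℕ} (hq : Computable q)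
    (H : ∀ n m, m ∈ f n → m ∈ g (q n)) : SubTuringLE f g := by
  refine ⟨queryOnce q, ?_, fun n m hm => ⟨[m], fun k hk => ?_, Part.mem_some _⟩⟩
  · exact Computable.partrec <| Computable.option_casesOn
      (Primrec.list_head?.comp Primrec.list_tail).to_comp
      ((Computable.const false).pair (hq.comp Primrec.list_headI.to_comp))
      ((Computable.const true).pair Computable.snd).to₂
  · obtain rfl : k = 0 := by simpa using hk
    exact ⟨q n, Part.mem_some _, H n m hm⟩

theorem haltsTo_of_mem_pMeet {f g : ℕ →. ℕ} {p m : ℕ} (hm : m ∈ PMeet f g p) :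
    HaltsTo (phi p.unpair.1) f p.unpair.2.unpair.2 m ∧
      HaltsTo (phi p.unpair.2.unpair.1) g p.unpair.2.unpair.2 m := by
  obtain ⟨hp, rfl⟩ := Part.mem_mk_iff.1 hm
  exact Classical.choose_spec hp

theorem mem_pMeet_of_haltsTo {f g : ℕ →. ℕ} {d e n m : ℕ} (hf : HaltsTo (phi d) f n m)
    (hg : HaltsTo (phi e) g n m) : m ∈ PMeet f g (Nat.pair d (Nat.pair e n)) := by
  have hex : ∃ m', HaltsTo (phi d) f n m' ∧ HaltsTo (phi e) g n m' := ⟨m, hf, hg⟩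
  simp only [PMeet, Part.mem_mk_iff, Nat.unpair_pair]
  exact ⟨hex, (Classical.choose_spec hex).1.unique hf⟩

theorem meet_is_glb (f g : ℕ →. ℕ) :
    SubTuringLE (PMeet f g) f ∧ SubTuringLE (PMeet f g) g ∧
    ∀ h : ℕ →. ℕ, SubTuringLE h f → SubTuringLE h g → SubTuringLE h (PMeet f g) := by
  have hd : Computable fun p : ℕ => p.unpair.1 := Computable.fst.comp Computable.unpair
  have he : Computable fun p : ℕ => p.unpair.2.unpair.1 :=
    Computable.fst.comp (Computable.unpair.comp (Computable.snd.comp Computable.unpair))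
  have hn : Computable fun p : ℕ => p.unpair.2.unpair.2 :=
    Computable.snd.comp (Computable.unpair.comp (Computable.snd.comp Computable.unpair))
  refine ⟨.of_haltsTo_phi hd hn fun p m hm => (haltsTo_of_mem_pMeet hm).1,
    .of_haltsTo_phi he hn fun p m hm => (haltsTo_of_mem_pMeet hm).2, ?_⟩
  rintro h ⟨Φ, hΦ, hf⟩ ⟨Ψ, hΨ, hg⟩
  obtain ⟨d, rfl⟩ := exists_phi_eq hΦ
  obtain ⟨e, rfl⟩ := exists_phi_eq hΨ
  exact .of_mem_comp (Computable.pair (Computable.const d)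
      (Computable.pair (Computable.const e) Computable.id))
    fun n m hm => mem_pMeet_of_haltsTo (hf n m hm) (hg n m hm)
end
end

section
/- No strictly decreasing ω-sequence of subTuring degrees has an infimum: if (g_n) is a sequence of partial functions with g_{n+1} <subT g_n for all n, and h is any lower bound (h ≤subT g_n for all n), then there exists a partial function f such that f ≤subT g_n for all n but f is not subTuring reducible to h. -/
/-!
SubTuring reducibility is a preorder: two reductions compose by running the outer machine and
answering each of its oracle queries by a complete run of the inner machine; the histories of these
inner runs, concatenated, form the history of the composite.

Hence no `g e` reduces to the lower bound `h` (else `g e ≤ h ≤ g (e + 1)`), so for each `e` some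
input of `g e` defeats the `e`-th machine with oracle `h`, even when that input is handed to the
machine packed together with `e` and with codes of reductions of `g e` to `g 0, …, g e`. Let `f`
take, at the packed point of `e`, the value of `g e` at that input. No machine reduces `f` to `h`,
but `f` reduces to each `g k`: through a finite table at the points with `e < k`, and by running
the stored reduction of `g e` to `g k` at the others.
-/

open Classical

noncomputable section

open Nat.Partrec (Code)

def machine (e : ℕ) (l : List ℕ) : Part (Bool × ℕ) :=
  ((Denumerable.ofNat Code e).eval (Encodable.encode l)).bind fun n =>
    (Encodable.decode n : Option (Bool × ℕ))

theorem machine_partrec₂ : Partrec₂ machine :=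
  (Code.eval_part.comp ((Computable.ofNat Code).comp .fst) (Computable.encode.comp .snd)).bind
    (Computable.ofOption (Computable.decode.comp .snd)).to₂

theorem machine_partrec (e : ℕ) : Partrec (machine e) :=
  machine_partrec₂.comp (Computable.const e) Computable.id

theorem exists_machine_eq {Φ : List ℕ →. Bool × ℕ} (hΦ : Partrec Φ) : ∃ e, machine e = Φ := by
  obtain ⟨c, hc⟩ := Code.exists_code.1 hΦ
  refine ⟨Encodable.encode c, funext fun l => ?_⟩
  simp only [machine, Denumerable.ofNat_encode, hc, Encodable.encodek, Part.coe_some,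
    Part.bind_some, Part.bind_map, Part.bind_some_right]

theorem machine_const (r : Bool × ℕ) (l : List ℕ) :
    machine (Encodable.encode (Code.const (Encodable.encode r))) l = Part.some r := by
  simp only [machine, Denumerable.ofNat_encode, Code.eval_const, Part.bind_some,
    Encodable.encodek, Part.coe_some]

def ReducesVia (e : ℕ) (f g : ℕ →. ℕ) : Prop := ∀ n m, m ∈ f n → HaltsTo (machine e) g n m

theorem subTuringLE_iff_exists_reducesVia {f g : ℕ →. ℕ} :
    SubTuringLE f g ↔ ∃ e, ReducesVia e f g := by
  constructor
  · rintro ⟨Φ, hΦ, hred⟩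
    obtain ⟨e, rfl⟩ := exists_machine_eq hΦ
    exact ⟨e, hred⟩
  · rintro ⟨e, he⟩
    exact ⟨machine e, machine_partrec e, he⟩

theorem HaltsTo.of_cons_eq {Φ Ψ : List ℕ →. Bool × ℕ} {o : ℕ →. ℕ} {x y m : ℕ}
    (hΨ : ∀ as, Ψ (x :: as) = Φ (y :: as)) (h : HaltsTo Φ o y m) : HaltsTo Ψ o x m := by
  obtain ⟨as, hv, hm⟩ := h
  refine ⟨as, fun k hk => ?_, by rwa [hΨ]⟩
  obtain ⟨q, hq, ha⟩ := hv k hk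
  exact ⟨q, by rwa [hΨ], ha⟩

theorem ValidHist.append {Φ : List ℕ →. Bool × ℕ} {o : ℕ →. ℕ} {n : ℕ} {A B : List ℕ}
    (hA : ValidHist Φ o n A)
    (hB : ∀ k (hk : k < B.length), ∃ q, (false, q) ∈ Φ (n :: (A ++ B.take k)) ∧ B[k] ∈ o q) :
    ValidHist Φ o n (A ++ B) := by
  intro k hk
  rcases lt_or_ge k A.length with hkA | hkA
  · simpa [List.take_append_of_le_length hkA.le, List.getElem_append_left hkA] using hA k hkA
  · obtain ⟨j, rfl⟩ := Nat.exists_eq_add_of_le hkA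
    simpa [List.take_append, List.take_of_length_le, List.getElem_append_right hkA] using
      hB j (by simp at hk; omega)

theorem subTuringLE_refl (f : ℕ →. ℕ) : SubTuringLE f f := by
  -- on input `x` query `x`; once the answer `m` is in the history, output it
  refine ⟨fun l => Part.some (decide (2 ≤ l.length), l.reverse.headI), ?_,
    fun x m hm => ⟨[m], ?_, ?_⟩⟩
  · exact ((Primrec.nat_le.decide.comp (Primrec.const 2) Primrec.list_length).pair
      (Primrec.list_headI.comp Primrec.list_reverse)).to_comp
  · intro k hk
    obtain rfl : k = 0 := by simpa using hk
    exact ⟨x, by simp, hm⟩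
  · simp

theorem PFun.mem_fix_of_reflTransGen {α β : Type*} {f : α →. β ⊕ α} {a a' : α} {b : β}
    (h : Relation.ReflTransGen (fun a a' => Sum.inr a' ∈ f a) a a') (hb : b ∈ f.fix a') :
    b ∈ f.fix a := by
  induction h using Relation.ReflTransGen.head_induction_on with
  | refl => exact hb
  | head hstep _ ih => exact PFun.mem_fix_iff.2 (Or.inr ⟨_, hstep, ih⟩)

/-- A state of the composition of two machines: the input `x :: fh` of the outer machine, the
input `q :: ph` of the inner machine while it answers the outer query `q`, and the part of the
oracle history not read yet. -/
abbrev CompState := List ℕ × Option (List ℕ) × List ℕ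

def compCont (s : CompState) (r : Bool × ℕ) : (Bool × ℕ) ⊕ CompState :=
  match s, r with
  | (_, none, _), (true, m) => .inl (true, m)
  | (xs, none, rest), (false, q) => .inr (xs, some [q], rest)
  | (xs, some _, rest), (true, a) => .inr (xs ++ [a], none, rest)
  | (_, some _, []), (false, q) => .inl (false, q)
  | (xs, some qs, a :: rest), (false, _) => .inr (xs, some (qs ++ [a]), rest)

theorem compCont_primrec₂ : Primrec₂ compCont := by
  let P := CompState × (Bool × ℕ)
  have hxs : Primrec fun p : P => p.1.1 := Primrec.fst.comp Primrec.fst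
  have hrest : Primrec fun p : P => p.1.2.2 := Primrec.snd.comp (Primrec.snd.comp Primrec.fst)
  have hr : Primrec fun p : P => p.2 := Primrec.snd
  have hnone : Primrec fun p : P =>
      bif p.2.1 then (.inl p.2 : (Bool × ℕ) ⊕ CompState) else .inr (p.1.1, some [p.2.2], p.1.2.2) :=
    Primrec.cond (Primrec.fst.comp hr) (Primrec.sumInl.comp hr) (Primrec.sumInr.comp
      (hxs.pair ((Primrec.option_some.comp (Primrec.list_cons.comp (Primrec.snd.comp hr)
        (Primrec.const []))).pair hrest)))
  have hread : Primrec₂ fun (w : P × List ℕ) (ar : ℕ × List ℕ) =>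
      (.inr (w.1.1.1, some (w.2 ++ [ar.1]), ar.2) : (Bool × ℕ) ⊕ CompState) :=
    Primrec.sumInr.comp ((hxs.comp (Primrec.fst.comp Primrec.fst)).pair
      ((Primrec.option_some.comp (Primrec.list_append.comp (Primrec.snd.comp Primrec.fst)
        (Primrec.list_cons.comp (Primrec.fst.comp Primrec.snd) (Primrec.const [])))).pair
        (Primrec.snd.comp Primrec.snd)))
  have hsome : Primrec₂ fun (p : P) (qs : List ℕ) =>
      bif p.2.1 then (.inr (p.1.1 ++ [p.2.2], none, p.1.2.2) : (Bool × ℕ) ⊕ CompState)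
      else List.casesOn p.1.2.2 (.inl p.2) fun a rest => .inr (p.1.1, some (qs ++ [a]), rest) :=
    Primrec.cond (Primrec.fst.comp (hr.comp Primrec.fst))
      (Primrec.sumInr.comp ((Primrec.list_append.comp (hxs.comp Primrec.fst)
        (Primrec.list_cons.comp (Primrec.snd.comp (hr.comp Primrec.fst)) (Primrec.const []))).pair
        ((Primrec.const none).pair (hrest.comp Primrec.fst))))
      (Primrec.list_casesOn (hrest.comp Primrec.fst) (Primrec.sumInl.comp (hr.comp Primrec.fst))
        hread)
  refine (Primrec.option_casesOn (Primrec.fst.comp (Primrec.snd.comp Primrec.fst)) hnone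
    hsome).of_eq ?_
  rintro ⟨⟨xs, _ | qs, _ | ⟨a, rest⟩⟩, _ | _, n⟩ <;> rfl

def compStep (cf cp : ℕ) (s : CompState) : Part ((Bool × ℕ) ⊕ CompState) :=
  (machine (bif s.2.1.isSome then cp else cf) (s.2.1.getD s.1)).map (compCont s)

/-- The machine that runs `machine cf` with each of its oracle queries answered by running
`machine cp`. -/
def compMachine (cf cp : ℕ) (l : List ℕ) : Part (Bool × ℕ) :=
  PFun.fix (compStep cf cp) ([l.headI], none, l.tail)

theorem compMachine_partrec (cf cp : ℕ) : Partrec (compMachine cf cp) := by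
  have hstep : Partrec (compStep cf cp) :=
    (machine_partrec₂.comp
      (Primrec.cond (Primrec.option_isSome.comp (Primrec.fst.comp Primrec.snd))
        (Primrec.const cp) (Primrec.const cf)).to_comp
      (Primrec.option_getD.comp (Primrec.fst.comp Primrec.snd) Primrec.fst).to_comp).map
      (compCont_primrec₂.to_comp.comp Computable.fst Computable.snd).to₂
  exact hstep.fix.comp ((Primrec.list_cons.comp Primrec.list_headI (Primrec.const [])).pair
    ((Primrec.const none).pair Primrec.list_tail)).to_comp

abbrev CompReaches (cf cp : ℕ) : CompState → CompState → Prop :=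
  Relation.ReflTransGen fun s s' => Sum.inr s' ∈ compStep cf cp s

section composition

variable {cf cp : ℕ} {o : ℕ →. ℕ} {xs : List ℕ} {q : ℕ} {H rest : List ℕ}

theorem compReaches_query (hq : (false, q) ∈ machine cf xs) :
    CompReaches cf cp (xs, none, rest) (xs, some [q], rest) :=
  .single (Part.mem_map _ hq)

theorem compReaches_answer {qs : List ℕ} {a : ℕ} (ha : (true, a) ∈ machine cp qs) :
    CompReaches cf cp (xs, some qs, rest) (xs ++ [a], none, rest) :=
  .single (Part.mem_map _ ha)

theorem false_mem_fix_compStep {qs : List ℕ} {q' : ℕ} (hq' : (false, q') ∈ machine cp qs) :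
    (false, q') ∈ PFun.fix (compStep cf cp) (xs, some qs, []) :=
  PFun.fix_stop (Part.mem_map _ hq')

theorem compReaches_inner (hH : ValidHist (machine cp) o q H) :
    ∀ j ≤ H.length, ∀ rest,
      CompReaches cf cp (xs, some [q], H.take j ++ rest) (xs, some (q :: H.take j), rest) := by
  intro j
  induction j with
  | zero => intro _ rest; exact .refl
  | succ j ih =>
    intro hj rest
    have hjH : j < H.length := hj
    obtain ⟨q', hq', -⟩ := hH j hjH
    have hstep : CompReaches cf cp (xs, some (q :: H.take j), H[j] :: rest)
        (xs, some (q :: (H.take j ++ [H[j]])), rest) :=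
      .single (Part.mem_map _ hq')
    rw [List.take_succ_eq_append_getElem hjH, List.append_assoc, List.singleton_append]
    exact (ih hjH.le _).trans hstep

theorem compReaches_segment {a : ℕ} (hq : (false, q) ∈ machine cf xs)
    (hH : ValidHist (machine cp) o q H) (ha : (true, a) ∈ machine cp (q :: H)) :
    CompReaches cf cp (xs, none, H ++ rest) (xs ++ [a], none, rest) := by
  have hinner := compReaches_inner (cf := cf) (xs := xs) hH H.length le_rfl rest
  rw [List.take_length] at hinner
  exact (compReaches_query hq).trans (hinner.trans (compReaches_answer ha))

theorem exists_false_mem_fix_compStep (hq : (false, q) ∈ machine cf xs)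
    (hH : ValidHist (machine cp) o q H) {j : ℕ} (hj : j < H.length) :
    ∃ q', (false, q') ∈ PFun.fix (compStep cf cp) (xs, none, H.take j) ∧ H[j] ∈ o q' := by
  obtain ⟨q', hq', hoq'⟩ := hH j hj
  have hreach := (compReaches_query (cf := cf) (cp := cp) (rest := H.take j) hq).trans
    (by simpa using compReaches_inner (cf := cf) (xs := xs) hH j hj.le [])
  exact ⟨q', PFun.mem_fix_of_reflTransGen hreach (false_mem_fix_compStep hq'), hoq'⟩

end composition

section run

variable {cf cp : ℕ} {o : ℕ →. ℕ} {x : ℕ} {FH : List ℕ} {Q : ℕ → ℕ} {SH : ℕ → List ℕ}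

theorem compReaches_flatten
    (hQ : ∀ i < FH.length, (false, Q i) ∈ machine cf (x :: FH.take i))
    (hSH : ∀ i < FH.length, ValidHist (machine cp) o (Q i) (SH i))
    (hans : ∀ i (hi : i < FH.length), (true, FH[i]) ∈ machine cp (Q i :: SH i)) :
    ∀ i ≤ FH.length, ∀ rest, CompReaches cf cp
      ([x], none, ((List.range i).map SH).flatten ++ rest) (x :: FH.take i, none, rest) := by
  intro i
  induction i with
  | zero => intro _ rest; exact .refl
  | succ i ih =>
    intro hi rest
    have hiF : i < FH.length := hi
    have hsegment := compReaches_segment (rest := rest) (hQ i hiF) (hSH i hiF) (hans i hiF)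
    rw [List.cons_append, ← List.take_succ_eq_append_getElem hiF] at hsegment
    simpa only [List.range_succ, List.map_append, List.flatten_append, List.map_singleton,
      List.flatten_singleton, List.append_assoc] using (ih hiF.le _).trans hsegment

theorem validHist_compMachine_flatten
    (hQ : ∀ i < FH.length, (false, Q i) ∈ machine cf (x :: FH.take i))
    (hSH : ∀ i < FH.length, ValidHist (machine cp) o (Q i) (SH i))
    (hans : ∀ i (hi : i < FH.length), (true, FH[i]) ∈ machine cp (Q i :: SH i)) :
    ∀ i ≤ FH.length, ValidHist (compMachine cf cp) o x ((List.range i).map SH).flatten := by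
  intro i
  induction i with
  | zero => intro _ k hk; simp at hk
  | succ i ih =>
    intro hi
    have hiF : i < FH.length := hi
    simp only [List.range_succ, List.map_append, List.flatten_append, List.map_singleton,
      List.flatten_singleton]
    refine (ih hiF.le).append fun k hk => ?_
    obtain ⟨q', hq', hoq'⟩ := exists_false_mem_fix_compStep (hQ i hiF) (hSH i hiF) hk
    exact ⟨q', PFun.mem_fix_of_reflTransGen (compReaches_flatten hQ hSH hans i hiF.le _) hq',
      hoq'⟩

end run

theorem ReducesVia.haltsTo_compMachine {f g k : ℕ →. ℕ} {cf cp : ℕ} (hf : ReducesVia cf f g)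
    (hg : ReducesVia cp g k) {x m : ℕ} (hm : m ∈ f x) : HaltsTo (compMachine cf cp) k x m := by
  obtain ⟨FH, hFH, hhalt⟩ := hf x m hm
  have hsegment : ∀ i, ∃ q H, ∀ hi : i < FH.length, (false, q) ∈ machine cf (x :: FH.take i) ∧
      ValidHist (machine cp) k q H ∧ (true, FH[i]) ∈ machine cp (q :: H) := by
    intro i
    by_cases hi : i < FH.length
    · obtain ⟨q, hq, hFHi⟩ := hFH i hi
      obtain ⟨H, hH, hans⟩ := hg q _ hFHi
      exact ⟨q, H, fun _ => ⟨hq, hH, hans⟩⟩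
    · exact ⟨0, [], fun h => absurd h hi⟩
  choose Q SH hQSH using hsegment
  have hQ := fun i hi => (hQSH i hi).1
  have hSH := fun i hi => (hQSH i hi).2.1
  have hans := fun i hi => (hQSH i hi).2.2
  refine ⟨_, validHist_compMachine_flatten hQ hSH hans _ le_rfl, ?_⟩
  have hreach := compReaches_flatten hQ hSH hans _ le_rfl []
  rw [List.append_nil, List.take_length] at hreach
  exact PFun.mem_fix_of_reflTransGen hreach (PFun.fix_stop (Part.mem_map _ hhalt))

theorem SubTuringLE.trans {f g k : ℕ →. ℕ} (hfg : SubTuringLE f g) (hgk : SubTuringLE g k) :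
    SubTuringLE f k := by
  obtain ⟨cf, hcf⟩ := subTuringLE_iff_exists_reducesVia.1 hfg
  obtain ⟨cp, hcp⟩ := subTuringLE_iff_exists_reducesVia.1 hgk
  exact ⟨compMachine cf cp, compMachine_partrec cf cp,
    fun _ _ hm => hcf.haltsTo_compMachine hcp hm⟩

theorem subTuringLE_of_le {g : ℕ → ℕ →. ℕ} (hg : ∀ n, SubTuringLE (g (n + 1)) (g n)) {m n : ℕ}
    (hmn : m ≤ n) : SubTuringLE (g n) (g m) := by
  induction n, hmn using Nat.le_induction with
  | base => exact subTuringLE_refl _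
  | succ n _ ih => exact (hg n).trans ih

def dispatchMachine (G : ℕ → Option (ℕ × ℕ)) (l : List ℕ) : Part (Bool × ℕ) :=
  (G l.headI : Part (ℕ × ℕ)).bind fun dy => machine dy.1 (dy.2 :: l.tail)

theorem subTuringLE_of_dispatch {f o : ℕ →. ℕ} {G : ℕ → Option (ℕ × ℕ)} (hG : Computable G)
    (hf : ∀ n m, m ∈ f n → ∃ d y, G n = some (d, y) ∧ HaltsTo (machine d) o y m) :
    SubTuringLE f o := by
  refine ⟨dispatchMachine G, ?_, fun n m hm => ?_⟩
  · exact (Computable.ofOption (hG.comp Primrec.list_headI.to_comp)).bind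
      (machine_partrec₂.comp (Computable.fst.comp Computable.snd)
        (Computable.list_cons.comp (Computable.snd.comp Computable.snd)
          (Primrec.list_tail.to_comp.comp Computable.fst)))
  · obtain ⟨d, y, hG, hhalt⟩ := hf n m hm
    exact hhalt.of_cons_eq fun as => by simp [dispatchMachine, hG]

theorem exists_mem_not_haltsTo {f o : ℕ →. ℕ} (hfo : ¬ SubTuringLE f o) (e : ℕ) {t : ℕ → ℕ}
    (ht : Computable t) : ∃ y w, w ∈ f y ∧ ¬ HaltsTo (machine e) o (t y) w := by
  by_contra! hall
  exact hfo (subTuringLE_of_dispatch (Computable.option_some.comp ((Computable.const e).pair ht))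
    fun y w hw => ⟨e, t y, rfl, hall y w hw⟩)

def constCode (r : Bool × ℕ) : ℕ := Encodable.encode (Code.const (Encodable.encode r))

theorem haltsTo_constCode {o : ℕ →. ℕ} {n m : ℕ} : HaltsTo (machine (constCode (true, m))) o n m :=
  ⟨[], fun _ hk => absurd hk (Nat.not_lt_zero _),
    by rw [constCode, machine_const]; exact Part.mem_some _⟩

section diagonal

variable {x v : ℕ → ℕ} {L : ℕ → List ℕ}

/-- Besides `e` and the input `x e`, the point stores the list `L e` of codes, from which a
uniform reduction to `g k` reads off the reduction of `g e` to `g k`. -/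
def diagPoint (x : ℕ → ℕ) (L : ℕ → List ℕ) (e : ℕ) : ℕ :=
  Nat.pair e (Nat.pair (x e) (Encodable.encode (L e)))

def diagFun (x : ℕ → ℕ) (L : ℕ → List ℕ) (v : ℕ → ℕ) : ℕ →. ℕ := fun z =>
  if z = diagPoint x L z.unpair.1 then Part.some (v z.unpair.1) else Part.none

theorem mem_diagFun {z m : ℕ} : m ∈ diagFun x L v z ↔ ∃ e, z = diagPoint x L e ∧ m = v e := by
  constructor
  · intro hm
    unfold diagFun at hm
    split_ifs at hm with hz
    · exact ⟨_, hz, Part.mem_some_iff.1 hm⟩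
    · exact absurd hm (Part.notMem_none _)
  · rintro ⟨e, rfl, rfl⟩
    simp [diagFun, diagPoint]

theorem not_subTuringLE_diagFun {o : ℕ →. ℕ}
    (hv : ∀ e, ¬ HaltsTo (machine e) o (diagPoint x L e) (v e)) :
    ¬ SubTuringLE (diagFun x L v) o := by
  intro hle
  obtain ⟨e, he⟩ := subTuringLE_iff_exists_reducesVia.1 hle
  exact hv e (he _ _ (mem_diagFun.2 ⟨e, rfl, rfl⟩))

/-- At the point of `e`, run a machine that outputs `v e` outright if `e < k`, and otherwise the
`k`-th stored code on the input stored there. -/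
def diagDispatch (v : ℕ → ℕ) (k z : ℕ) : Option (ℕ × ℕ) :=
  match (List.ofFn fun i : Fin k => constCode (true, v i))[z.unpair.1]? with
  | some c => some (c, 0)
  | none => ((Encodable.decode z.unpair.2.unpair.2 : Option (List ℕ)).bind (·[k]?)).map
      (·, z.unpair.2.unpair.1)

theorem diagDispatch_primrec (v : ℕ → ℕ) (k : ℕ) : Primrec (diagDispatch v k) := by
  have hw : Primrec fun z : ℕ => z.unpair.2.unpair := Primrec.unpair.comp (Primrec.snd.comp .unpair)
  have hcodes : Primrec fun z : ℕ =>
      (Encodable.decode z.unpair.2.unpair.2 : Option (List ℕ)).bind (·[k]?) :=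
    Primrec.option_bind (Primrec.decode.comp (Primrec.snd.comp hw))
      (Primrec.list_getElem?.comp Primrec.snd (Primrec.const k)).to₂
  refine (Primrec.option_casesOn
    ((Primrec.list_getElem?₁ (List.ofFn fun i : Fin k => constCode (true, v i))).comp
      (Primrec.fst.comp Primrec.unpair))
    (Primrec.option_map hcodes (Primrec.snd.pair (Primrec.fst.comp (hw.comp Primrec.fst))).to₂)
    (Primrec.option_some.comp (Primrec.snd.pair (Primrec.const 0))).to₂).of_eq fun z => ?_
  unfold diagDispatch
  split <;> simp_all

theorem diagDispatch_diagPoint_of_lt {k e : ℕ} (hek : e < k) :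
    diagDispatch v k (diagPoint x L e) = some (constCode (true, v e), 0) := by
  simp [diagDispatch, diagPoint, hek]

theorem diagDispatch_diagPoint_of_le {k e : ℕ} (hke : k ≤ e) :
    diagDispatch v k (diagPoint x L e) = (L e)[k]?.map (·, x e) := by
  simp [diagDispatch, diagPoint, hke]

theorem subTuringLE_diagFun {o : ℕ →. ℕ} (k : ℕ)
    (hL : ∀ e, k ≤ e → ∃ d, (L e)[k]? = some d ∧ HaltsTo (machine d) o (x e) (v e)) :
    SubTuringLE (diagFun x L v) o := by
  refine subTuringLE_of_dispatch (diagDispatch_primrec v k).to_comp fun z m hm => ?_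
  obtain ⟨e, rfl, rfl⟩ := mem_diagFun.1 hm
  rcases lt_or_ge e k with hek | hke
  · exact ⟨_, 0, diagDispatch_diagPoint_of_lt hek, haltsTo_constCode⟩
  · obtain ⟨d, hd, hhalt⟩ := hL e hke
    exact ⟨d, x e, by rw [diagDispatch_diagPoint_of_le hke, hd]; rfl, hhalt⟩

end diagonal

theorem exists_lowerBound_not_subTuringLE {g : ℕ → ℕ →. ℕ} {h : ℕ →. ℕ}
    (hle : ∀ m n, m ≤ n → SubTuringLE (g n) (g m)) (hnot : ∀ n, ¬ SubTuringLE (g n) h) :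
    ∃ f, (∀ k, SubTuringLE f (g k)) ∧ ¬ SubTuringLE f h := by
  have hcode : ∀ e k, ∃ d, k ≤ e → ReducesVia d (g e) (g k) := fun e k => by
    by_cases hke : k ≤ e
    · obtain ⟨d, hd⟩ := subTuringLE_iff_exists_reducesVia.1 (hle k e hke)
      exact ⟨d, fun _ => hd⟩
    · exact ⟨0, fun hk => absurd hk hke⟩
  choose D hD using hcode
  let L e := List.ofFn fun i : Fin (e + 1) => D e i
  choose x v hv hdiag using fun e => exists_mem_not_haltsTo (hnot e) e
    (t := fun y => Nat.pair e (Nat.pair y (Encodable.encode (L e))))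
    (Primrec₂.natPair.comp (Primrec.const e)
      (Primrec₂.natPair.comp Primrec.id (Primrec.const _))).to_comp
  refine ⟨diagFun x L v, fun k => subTuringLE_diagFun k fun e hke => ⟨D e k, ?_, ?_⟩,
    not_subTuringLE_diagFun hdiag⟩
  · exact List.getElem?_ofFn.trans (dif_pos (Nat.lt_succ_of_le hke))
  · exact hD e k hke _ _ (hv e)

theorem no_inf_of_strictly_decreasing (g : ℕ → ℕ →. ℕ) (h : ℕ →. ℕ)
    (hdec : ∀ n, SubTuringLE (g (n + 1)) (g n) ∧ ¬ SubTuringLE (g n) (g (n + 1)))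
    (hlb : ∀ n, SubTuringLE h (g n)) :
    ∃ f : ℕ →. ℕ, (∀ n, SubTuringLE f (g n)) ∧ ¬ SubTuringLE f h :=
  exists_lowerBound_not_subTuringLE (fun _ _ => subTuringLE_of_le fun n => (hdec n).1)
    fun n hn => (hdec n).2 (hn.trans (hlb (n + 1)))
end
end

section
/- The naive relative halting problem K₀ is not monotone on subTuring degrees: there exist partial functions f and g with g ≤subT f but K₀(g) not ≤subT K₀(f). Specifically, for any total f there is a set A ⊆ ℕ such that f↾A ≤subT f but K₀(f↾A) ≰subT K₀(f). -/
open Classical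

noncomputable section

/-- Restriction of a partial function to a set: `f↾A`. -/
def restrictTo (f : ℕ →. ℕ) (A : Set ℕ) : ℕ →. ℕ := fun n =>
  if n ∈ A then f n else Part.none

/-- The naive relative halting problem: `K₀(f)(e) = 1` if `Φ_e[f](e)` halts,
`0` otherwise (a total function). -/
def K0 (f : ℕ →. ℕ) : ℕ →. ℕ := fun e =>
  Part.some (if (∃ m, HaltsTo (phi e) f e m) then 1 else 0)

-- determinism of valid histories
lemma validHist_take_eq {Φ : List ℕ →. Bool × ℕ} {g : ℕ →. ℕ} {n : ℕ} {as as' : List ℕ}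
    (h : ValidHist Φ g n as) (h' : ValidHist Φ g n as') :
    ∀ k, k ≤ as.length → k ≤ as'.length → as.take k = as'.take k := by
  intro k
  induction k with
  | zero => simp
  | succ k ih =>
    intro hk hk'
    have hkl : k < as.length := hk
    have hkl' : k < as'.length := hk'
    have ht := ih (le_of_lt hkl) (le_of_lt hkl')
    obtain ⟨q, hq, ha⟩ := h k hkl
    obtain ⟨q', hq', ha'⟩ := h' k hkl'
    rw [← ht] at hq'
    have hqq : q = q' := by
      have := Part.mem_unique hq hq'
      exact (Prod.mk.injEq _ _ _ _).mp this |>.2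
    subst hqq
    have hae : as[k] = as'[k] := Part.mem_unique ha ha'
    rw [List.take_succ, List.take_succ, ht,
      List.getElem?_eq_getElem hkl, List.getElem?_eq_getElem hkl', hae]

lemma haltsTo_len_le {Φ : List ℕ →. Bool × ℕ} {g : ℕ →. ℕ} {n m : ℕ} {as as' : List ℕ}
    (h : ValidHist Φ g n as) (ht : (true, m) ∈ Φ (n :: as)) (h' : ValidHist Φ g n as') :
    as'.length ≤ as.length := by
  by_contra hlt
  push_neg at hlt
  have heq := validHist_take_eq h h' as.length le_rfl (le_of_lt hlt)
  rw [List.take_length] at heq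
  obtain ⟨q, hq, -⟩ := h' as.length hlt
  rw [← heq] at hq
  have := Part.mem_unique ht hq
  simp at this

lemma haltsTo_unique {Φ : List ℕ →. Bool × ℕ} {g : ℕ →. ℕ} {n m m' : ℕ}
    (h : HaltsTo Φ g n m) (h' : HaltsTo Φ g n m') : m = m' := by
  obtain ⟨as, hv, ht⟩ := h
  obtain ⟨as', hv', ht'⟩ := h'
  have hlen : as.length = as'.length :=
    le_antisymm (haltsTo_len_le hv' ht' hv) (haltsTo_len_le hv ht hv')
  have heq : as = as' := by
    have := validHist_take_eq hv hv' as.length le_rfl (le_of_eq hlen)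
    rwa [List.take_length, hlen, List.take_length] at this
  subst heq
  have := Part.mem_unique ht ht'
  exact ((Prod.mk.injEq _ _ _ _).mp this).2

-- every partrec Φ is phi e for some e
lemma exists_phi {Φ : List ℕ →. Bool × ℕ} (h : Partrec Φ) : ∃ e, phi e = Φ := by
  obtain ⟨c, hc⟩ := Nat.Partrec.Code.exists_code.mp h
  refine ⟨Encodable.encode c, ?_⟩
  funext l
  have : (Denumerable.ofNat Nat.Partrec.Code (Encodable.encode c)) = c :=
    Denumerable.ofNat_encode c
  simp only [phi, this, hc]
  apply Part.ext
  intro x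
  simp [Part.mem_bind_iff, Part.mem_map_iff, Encodable.encodek, Part.mem_ofOption]
  constructor
  · rintro (⟨b, hb, rfl⟩ | ⟨b, hb, rfl⟩) <;> exact hb
  · intro hx
    obtain ⟨b, q⟩ := x
    cases b
    · exact Or.inl ⟨q, hx, rfl⟩
    · exact Or.inr ⟨q, hx, rfl⟩

-- the "query n" machine
lemma query_index (n : ℕ) : ∃ e, ∀ g : ℕ →. ℕ,
    (∃ m, HaltsTo (phi e) g e m) ↔ (g n).Dom := by
  set F : List ℕ → Bool × ℕ := fun l => if l.length ≤ 1 then (false, n) else (true, 0) with hF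
  have hFp : Primrec F :=
    Primrec.ite (Primrec.nat_le.comp Primrec.list_length (Primrec.const 1))
      (Primrec.const _) (Primrec.const _)
  obtain ⟨e, he⟩ := exists_phi (hFp.to_comp.partrec)
  refine ⟨e, fun g => ⟨?_, ?_⟩⟩
  · rintro ⟨m, as, hv, ht⟩
    rw [he] at ht hv
    have h1 : (true, m) = F (e :: as) := Part.mem_some_iff.mp ht
    have hne : as ≠ [] := by
      rintro rfl
      simp [hF] at h1
    have hlen : 0 < as.length := List.length_pos_iff.mpr hne
    obtain ⟨q, hq, ha⟩ := hv 0 hlen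
    have h2 : (false, q) = F [e] := Part.mem_some_iff.mp hq
    have hqn : n = q := by simp [hF] at h2; exact h2.symm
    rw [← hqn] at ha
    exact Part.dom_iff_mem.mpr ⟨_, ha⟩
  · intro hd
    refine ⟨0, [(g n).get hd], ?_, ?_⟩
    · rw [he]
      intro k hk
      rcases Nat.lt_one_iff.mp (by simpa using hk) with rfl
      exact ⟨n, by simp [hF, PFun.coe_val], Part.get_mem hd⟩
    · rw [he]
      simp [hF, PFun.coe_val]

lemma restrictTo_dom (f : ℕ → ℕ) (A : Set ℕ) (n : ℕ) :
    ((restrictTo (f : ℕ →. ℕ) A) n).Dom ↔ n ∈ A := by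
  by_cases h : n ∈ A <;> simp [restrictTo, h]

lemma main_part (f : ℕ → ℕ) : ∃ A : Set ℕ,
    SubTuringLE (restrictTo (f : ℕ →. ℕ) A) (f : ℕ →. ℕ) ∧
    ¬ SubTuringLE (K0 (restrictTo (f : ℕ →. ℕ) A)) (K0 (f : ℕ →. ℕ)) := by
  -- first: restriction always reduces
  have hred : ∀ A : Set ℕ, SubTuringLE (restrictTo (f : ℕ →. ℕ) A) (f : ℕ →. ℕ) := by
    intro A
    set F : List ℕ → Bool × ℕ :=
      fun l => if l.length ≤ 1 then (false, l.headI) else (true, l.tail.headI) with hF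
    have hFp : Primrec F :=
      Primrec.ite (Primrec.nat_le.comp Primrec.list_length (Primrec.const 1))
        ((Primrec.const false).pair Primrec.list_headI)
        ((Primrec.const true).pair (Primrec.list_headI.comp Primrec.list_tail))
    refine ⟨(F : List ℕ →. Bool × ℕ), hFp.to_comp.partrec, ?_⟩
    intro n m hm
    have hmem : m ∈ ((f : ℕ →. ℕ) n) := by
      simp only [restrictTo] at hm
      split_ifs at hm
      · exact hm
      · simp at hm
    have hmf : m = f n := by simpa [PFun.coe_val] using hmem
    subst hmf
    refine ⟨[f n], ?_, ?_⟩
    · intro k hk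
      rcases Nat.lt_one_iff.mp (by simpa using hk) with rfl
      exact ⟨n, by simp [hF, PFun.coe_val], by simp [PFun.coe_val]⟩
    · simp [hF, PFun.coe_val]
  -- main diagonalization
  by_contra hcon
  push_neg at hcon
  have hall : ∀ A : Set ℕ, SubTuringLE (K0 (restrictTo (f : ℕ →. ℕ) A)) (K0 (f : ℕ →. ℕ)) :=
    fun A => hcon A (hred A)
  choose Φ hΦp hΦ using hall
  choose idx hidx using fun A => exists_phi (hΦp A)
  apply Function.cantor_injective idx
  intro A B hAB
  have hΦeq : Φ A = Φ B := by rw [← hidx A, ← hidx B, hAB]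
  have hval : ∀ n, (if (∃ m, HaltsTo (phi n) (restrictTo (f : ℕ →. ℕ) A) n m) then (1:ℕ) else 0)
      = (if (∃ m, HaltsTo (phi n) (restrictTo (f : ℕ →. ℕ) B) n m) then (1:ℕ) else 0) := by
    intro n
    have hA := hΦ A n _ (Part.mem_some _)
    have hB := hΦ B n _ (Part.mem_some _)
    rw [hΦeq] at hA
    exact haltsTo_unique hA hB
  ext n
  obtain ⟨e, he⟩ := query_index n
  have hv := hval e
  have h1 : (∃ m, HaltsTo (phi e) (restrictTo (f : ℕ →. ℕ) A) e m) ↔ n ∈ A :=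
    (he _).trans (restrictTo_dom f A n)
  have h2 : (∃ m, HaltsTo (phi e) (restrictTo (f : ℕ →. ℕ) B) e m) ↔ n ∈ B :=
    (he _).trans (restrictTo_dom f B n)
  have hiff : (∃ m, HaltsTo (phi e) (restrictTo (f : ℕ →. ℕ) A) e m) ↔
      (∃ m, HaltsTo (phi e) (restrictTo (f : ℕ →. ℕ) B) e m) := by
    by_cases hA : (∃ m, HaltsTo (phi e) (restrictTo (f : ℕ →. ℕ) A) e m) <;>
      by_cases hB : (∃ m, HaltsTo (phi e) (restrictTo (f : ℕ →. ℕ) B) e m) <;>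
      simp [hA, hB] at hv ⊢
  exact h1.symm.trans (hiff.trans h2)

theorem K0_not_monotone :
    (∃ f g : ℕ →. ℕ, SubTuringLE g f ∧ ¬ SubTuringLE (K0 g) (K0 f)) ∧
    ∀ f : ℕ → ℕ, ∃ A : Set ℕ,
      SubTuringLE (restrictTo (f : ℕ →. ℕ) A) (f : ℕ →. ℕ) ∧
      ¬ SubTuringLE (K0 (restrictTo (f : ℕ →. ℕ) A)) (K0 (f : ℕ →. ℕ)) := by
  refine ⟨?_, main_part⟩
  obtain ⟨A, h1, h2⟩ := main_part (fun _ => 0)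
  exact ⟨_, _, h1, h2⟩
end
end

section
/- The subTuring jump K has a fixed point: there exists a partial function ψ such that K(ψ) ≡subT ψ. One may take ψ(⟨a,b⟩) = 1 if the a-th Σ¹₁ sentence and the b-th Π¹₁ sentence are both true, ψ(⟨a,b⟩) = 0 if both are false, and undefined otherwise. -/
open Classical

noncomputable section

/-- The computation `Φ[g](n)` gets stuck: it makes a query outside `dom g`. -/
def Stuck (Φ : List ℕ →. Bool × ℕ) (g : ℕ →. ℕ) (n : ℕ) : Prop :=
  ∃ as q, ValidHist Φ g n as ∧ (false, q) ∈ Φ (n :: as) ∧ q ∉ g.Dom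

/-- The subTuring jump: `K f e = 1` if `Φ_e[f](e)` halts, `0` if it diverges
making only queries inside `dom f`, and undefined if it makes a query outside `dom f`. -/
def KJump (f : ℕ →. ℕ) : ℕ →. ℕ := fun e =>
  ⟨¬ Stuck (phi e) f e, fun _ => if (∃ m, HaltsTo (phi e) f e m) then 1 else 0⟩

/-! ### Auxiliary development -/

/-- Extension order on partial functions. -/
def PExt (f g : ℕ →. ℕ) : Prop := ∀ n a, a ∈ f n → a ∈ g n

theorem PExt.refl (f : ℕ →. ℕ) : PExt f f := fun _ _ h => h

theorem validHist_mono {Φ : List ℕ →. Bool × ℕ} {f g : ℕ →. ℕ} {n : ℕ} {as : List ℕ}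
    (h : PExt f g) (hv : ValidHist Φ f n as) : ValidHist Φ g n as := by
  intro k hk
  obtain ⟨q, hq, ha⟩ := hv k hk
  exact ⟨q, hq, h q _ ha⟩

theorem haltsTo_mono {Φ : List ℕ →. Bool × ℕ} {f g : ℕ →. ℕ} {n m : ℕ}
    (h : PExt f g) (hm : HaltsTo Φ f n m) : HaltsTo Φ g n m := by
  obtain ⟨as, hv, hh⟩ := hm
  exact ⟨as, validHist_mono h hv, hh⟩

/-- Build validity of a truncated history from validity statements at each index. -/
theorem validHist_take_of {Φ : List ℕ →. Bool × ℕ} {f : ℕ →. ℕ} {n : ℕ} {as : List ℕ} {k : ℕ}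
    (H : ∀ (i : ℕ) (hi : i < as.length), i < k →
      ∃ q : ℕ, (false, q) ∈ Φ (n :: as.take i) ∧ (as[i]'hi) ∈ f q) :
    ValidHist Φ f n (as.take k) := by
  intro i hi
  have hlen : i < as.length := by
    rw [List.length_take] at hi; omega
  have hik : i < k := by
    rw [List.length_take] at hi; omega
  obtain ⟨q, hq, ha⟩ := H i hlen hik
  refine ⟨q, ?_, ?_⟩
  · rwa [List.take_take, min_eq_left hik.le]
  · rwa [List.getElem_take]

/-- Determinism: if the run of `Φ` on `n` with oracle `f` never gets stuck, then any
history valid for an extension `g` of `f` is already valid for `f`. -/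
theorem validHist_anti {Φ : List ℕ →. Bool × ℕ} {f g : ℕ →. ℕ} {n : ℕ} {as : List ℕ}
    (hfg : PExt f g) (ns : ¬ Stuck Φ f n) (hv : ValidHist Φ g n as) : ValidHist Φ f n as := by
  intro k
  induction k using Nat.strong_induction_on with
  | _ k IH =>
    intro hk
    have hvf : ValidHist Φ f n (as.take k) :=
      validHist_take_of (fun i hi hik => IH i hik hi)
    obtain ⟨q, hq, hag⟩ := hv k hk
    have hdom : (f q).Dom := by
      by_contra hq'
      exact ns ⟨as.take k, q, hvf, hq, hq'⟩
    have h1 : (f q).get hdom ∈ f q := Part.get_mem hdom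
    have h3 : (f q).get hdom = as[k]'hk := Part.mem_unique (hfg q _ h1) hag
    exact ⟨q, hq, h3 ▸ h1⟩

theorem stuck_anti {Φ : List ℕ →. Bool × ℕ} {f g : ℕ →. ℕ} {n : ℕ}
    (hfg : PExt f g) (ns : ¬ Stuck Φ f n) : ¬ Stuck Φ g n := by
  rintro ⟨as, q, hv, hq, hqd⟩
  have hvf : ValidHist Φ f n as := validHist_anti hfg ns hv
  refine ns ⟨as, q, hvf, hq, fun hdom => hqd ?_⟩
  exact Part.dom_iff_mem.2 ⟨(f q).get hdom, hfg q _ (Part.get_mem hdom)⟩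

theorem haltsTo_anti {Φ : List ℕ →. Bool × ℕ} {f g : ℕ →. ℕ} {n m : ℕ}
    (hfg : PExt f g) (ns : ¬ Stuck Φ f n) (hm : HaltsTo Φ g n m) : HaltsTo Φ f n m := by
  obtain ⟨as, hv, hh⟩ := hm
  exact ⟨as, validHist_anti hfg ns hv, hh⟩

/-- The jump operator is monotone with respect to extension. -/
theorem kjump_mono {f g : ℕ →. ℕ} (hfg : PExt f g) : PExt (KJump f) (KJump g) := by
  intro e a ha
  obtain ⟨ns, hval⟩ := ha
  have ns' : ¬ Stuck (phi e) g e := stuck_anti hfg ns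
  refine ⟨ns', ?_⟩
  have hiff : (∃ m, HaltsTo (phi e) g e m) ↔ (∃ m, HaltsTo (phi e) f e m) :=
    ⟨fun ⟨m, h⟩ => ⟨m, haltsTo_anti hfg ns h⟩, fun ⟨m, h⟩ => ⟨m, haltsTo_mono hfg h⟩⟩
  show (if (∃ m, HaltsTo (phi e) g e m) then 1 else 0) = a
  have hval' : (if (∃ m, HaltsTo (phi e) f e m) then 1 else 0) = a := hval
  rwa [if_congr hiff rfl rfl]

/-- The padding operator whose fixed point we seek. -/
def Lam (f : ℕ →. ℕ) : ℕ →. ℕ := fun n =>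
  if n % 2 = 0 then KJump f (n / 2) else Part.none

theorem lam_mono {f g : ℕ →. ℕ} (hfg : PExt f g) : PExt (Lam f) (Lam g) := by
  intro n a ha
  unfold Lam at *
  split at ha
  · simpa [*] using kjump_mono hfg _ _ ha
  · simp at ha

/-- Graph of a partial function. -/
def graph (f : ℕ →. ℕ) : Set (ℕ × ℕ) := {p | p.2 ∈ f p.1}

theorem graph_subset_iff {f g : ℕ →. ℕ} : graph f ⊆ graph g ↔ PExt f g := by
  constructor
  · intro h n a ha; exact h (show (n, a) ∈ graph f from ha)
  · rintro h ⟨n, a⟩ ha; exact h n a ha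

/-- `Lam` has a fixed point, by Zorn's lemma (using monotonicity of `Lam`). -/
theorem exists_lam_fixed : ∃ ψ : ℕ →. ℕ, Lam ψ = ψ := by
  classical
  set S : Set (Set (ℕ × ℕ)) := {G | ∃ f : ℕ →. ℕ, G = graph f ∧ PExt f (Lam f)} with hS
  have hzorn : ∃ m, Maximal (· ∈ S) m := by
    apply zorn_subset
    intro c hc hchain
    by_cases hne : c.Nonempty
    · -- upper bound: the union, which is the graph of the "sup" function
      set U : Set (ℕ × ℕ) := ⋃₀ c with hU
      set F : ℕ →. ℕ := fun n => ⟨∃ a, (n, a) ∈ U, fun h => Classical.choose h⟩ with hF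
      have memF : ∀ n a, a ∈ F n ↔ (n, a) ∈ U := by
        intro n a
        constructor
        · rintro ⟨h, rfl⟩
          exact Classical.choose_spec h
        · intro hna
          have hdom : ∃ a, (n, a) ∈ U := ⟨a, hna⟩
          refine ⟨hdom, ?_⟩
          -- choose hdom and a both in U; single-valuedness via the chain
          have h1 : (n, Classical.choose hdom) ∈ U := Classical.choose_spec hdom
          obtain ⟨G1, hG1c, hin1⟩ := h1
          obtain ⟨G2, hG2c, hin2⟩ := hna
          obtain ⟨f1, rfl, -⟩ := hc hG1c
          obtain ⟨f2, rfl, -⟩ := hc hG2c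
          rcases eq_or_ne (graph f1) (graph f2) with heq | hne'
          · rw [heq] at hin1
            exact Part.mem_unique (show _ ∈ f2 n from hin1) (show _ ∈ f2 n from hin2)
          · rcases hchain hG1c hG2c hne' with h12 | h21
            · exact Part.mem_unique (show _ ∈ f2 n from h12 hin1)
                (show _ ∈ f2 n from hin2)
            · exact Part.mem_unique (show _ ∈ f1 n from hin1)
                (show _ ∈ f1 n from h21 hin2)
      have hUgraph : U = graph F := by
        ext ⟨n, a⟩
        exact (memF n a).symm
      have hext : ∀ G ∈ c, G ⊆ U := fun G hG => Set.subset_sUnion_of_mem hG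
      refine ⟨U, ?_, hext⟩
      refine ⟨F, hUgraph, ?_⟩
      intro n a ha
      obtain ⟨G, hGc, hin⟩ := (memF n a).1 ha
      obtain ⟨f, rfl, hf⟩ := hc hGc
      have hfF : PExt f F := by
        rw [← graph_subset_iff, ← hUgraph]
        exact hext _ hGc
      exact lam_mono hfF n a (hf n a hin)
    · -- empty chain: the empty graph works
      refine ⟨∅, ⟨fun _ => Part.none, ?_, ?_⟩, ?_⟩
      · ext ⟨n, a⟩; simp [graph]
      · intro n a ha; simp at ha
      · intro G hG; exact absurd ⟨G, hG⟩ hne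
  obtain ⟨M, hMS, hMmax⟩ := hzorn
  obtain ⟨ψ, rfl, hψ⟩ := hMS
  refine ⟨ψ, ?_⟩
  -- `Lam ψ` is also a post-fixed point extending `ψ`, so by maximality they are equal
  have h1 : graph ψ ⊆ graph (Lam ψ) := graph_subset_iff.2 hψ
  have h2 : graph (Lam ψ) ∈ S := ⟨Lam ψ, rfl, lam_mono hψ⟩
  have h3 : graph (Lam ψ) ⊆ graph ψ := hMmax h2 h1
  funext n
  apply Part.ext
  intro a
  exact ⟨fun h => graph_subset_iff.1 h3 n a h, fun h => hψ n a h⟩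

/-! ### The two reduction machines -/

def g1 : List ℕ → Option (Bool × ℕ) := fun l =>
  if l.length = 1 then some (false, 2 * l.headI)
  else if l.length = 2 then some (true, l.tail.headI) else none

def Phi1 : List ℕ →. Bool × ℕ := fun l => (g1 l : Part (Bool × ℕ))

def g2 : List ℕ → Option (Bool × ℕ) := fun l =>
  if l.length = 1 then
    (if l.headI % 2 = 0 then some (false, l.headI / 2) else none)
  else if l.length = 2 then some (true, l.tail.headI) else none

def Phi2 : List ℕ →. Bool × ℕ := fun l => (g2 l : Part (Bool × ℕ))

theorem g1_primrec : Primrec g1 := by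
  have hlen : Primrec (List.length : List ℕ → ℕ) := Primrec.list_length
  have hheadI : Primrec (List.headI : List ℕ → ℕ) := Primrec.list_headI
  have htail : Primrec (fun l : List ℕ => l.tail.headI) :=
    Primrec.list_headI.comp Primrec.list_tail
  refine Primrec.ite (Primrec.eq.comp hlen (Primrec.const 1)) ?_ ?_
  · exact Primrec.option_some.comp
      ((Primrec.const false).pair (Primrec.nat_mul.comp (Primrec.const 2) hheadI))
  · refine Primrec.ite (Primrec.eq.comp hlen (Primrec.const 2)) ?_ (Primrec.const none)
    exact Primrec.option_some.comp ((Primrec.const true).pair htail)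

theorem g2_primrec : Primrec g2 := by
  have hlen : Primrec (List.length : List ℕ → ℕ) := Primrec.list_length
  have hheadI : Primrec (List.headI : List ℕ → ℕ) := Primrec.list_headI
  have htail : Primrec (fun l : List ℕ => l.tail.headI) :=
    Primrec.list_headI.comp Primrec.list_tail
  refine Primrec.ite (Primrec.eq.comp hlen (Primrec.const 1)) ?_ ?_
  · refine Primrec.ite
      (Primrec.eq.comp (Primrec.nat_mod.comp hheadI (Primrec.const 2)) (Primrec.const 0))
      ?_ (Primrec.const none)
    exact Primrec.option_some.comp
      ((Primrec.const false).pair (Primrec.nat_div.comp hheadI (Primrec.const 2)))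
  · refine Primrec.ite (Primrec.eq.comp hlen (Primrec.const 2)) ?_ (Primrec.const none)
    exact Primrec.option_some.comp ((Primrec.const true).pair htail)

theorem phi1_partrec : Partrec Phi1 := g1_primrec.to_comp.ofOption

theorem phi2_partrec : Partrec Phi2 := g2_primrec.to_comp.ofOption

theorem KJump_fixed_point : ∃ ψ : ℕ →. ℕ, SubTuringEquiv (KJump ψ) ψ := by
  obtain ⟨ψ, hfix⟩ := exists_lam_fixed
  have hψeven : ∀ e, ψ (2 * e) = KJump ψ e := by
    intro e
    have : Lam ψ (2 * e) = KJump ψ e := by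
      simp [Lam, Nat.mul_mod_right, Nat.mul_div_cancel_left e (by norm_num : (0:ℕ) < 2)]
    rw [← this, hfix]
  refine ⟨ψ, ⟨Phi1, phi1_partrec, ?_⟩, ⟨Phi2, phi2_partrec, ?_⟩⟩
  · -- KJump ψ ≤subT ψ
    intro e m hm
    refine ⟨[m], ?_, ?_⟩
    · intro k hk
      have hk0 : k = 0 := by simpa [Nat.lt_one_iff] using hk
      subst hk0
      refine ⟨2 * e, ?_, ?_⟩
      · simp [Phi1, g1]
      · simp only [List.getElem_cons_zero]
        rw [hψeven]
        exact hm
    · simp [Phi1, g1]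
  · -- ψ ≤subT KJump ψ
    intro n m hm
    rw [← hfix] at hm
    unfold Lam at hm
    split at hm
    · next heven =>
      refine ⟨[m], ?_, ?_⟩
      · intro k hk
        have hk0 : k = 0 := by simpa [Nat.lt_one_iff] using hk
        subst hk0
        refine ⟨n / 2, ?_, ?_⟩
        · simp [Phi2, g2, heven]
        · simpa using hm
      · simp [Phi2, g2]
    · simp at hm
end
end

section
/- Anti-cupping lemma: let α, β, f be total functions and let A ⊆ ℕ be (α ⊕ β ⊕ f)-immune (A has no infinite subset that is c.e. relative to α ⊕ β ⊕ f). Then for any partial function g whose domain is α-c.e., if g ≤subT (f↾A) ⊕ β then g ≤subT β. -/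
open Classical

noncomputable section

/-- The join `f ⊕ g`: `(f ⊕ g)(2n) = f(n)`, `(f ⊕ g)(2n+1) = g(n)`. -/
def PJoin (f g : ℕ →. ℕ) : ℕ →. ℕ := fun n =>
  if n % 2 = 0 then f (n / 2) else g (n / 2)

/-- The join of two total functions. -/
def totalJoin (X Y : ℕ → ℕ) : ℕ → ℕ := fun n =>
  if n % 2 = 0 then X (n / 2) else Y (n / 2)

/-- `S` is computably enumerable relative to the total oracle `X`. -/
def REIn (X : ℕ → ℕ) (S : Set ℕ) : Prop :=
  ∃ Φ : List ℕ →. Bool × ℕ, Partrec Φ ∧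
    ∀ n, n ∈ S ↔ ∃ m, HaltsTo Φ (X : ℕ →. ℕ) n m

/-- `A` is `X`-immune: `A` has no infinite `X`-c.e. subset. -/
def ImmuneIn (X : ℕ → ℕ) (A : Set ℕ) : Prop :=
  ∀ S : Set ℕ, REIn X S → S ⊆ A → S.Finite

/-!
Let `Φ` reduce `g` to `(f↾A) ⊕ β`. Run `Φ` with the total oracle `f ⊕ β` on the inputs in the
`α`-c.e. domain of `g` and collect the arguments at which it consults `f`: this set is c.e. in
`α ⊕ β ⊕ f`. On such inputs the run agrees with the halting run of `Φ` with oracle `(f↾A) ⊕ β`,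
so every consulted argument lies in `A`, and the set is finite by immunity. Hardwiring the finitely
many consulted values of `f` into `Φ` reduces `g` to `β` alone.

Computations relative to a total oracle are simulated from finite prefixes of the oracle with
bounded evaluation (`Nat.Partrec.Code.evaln`), which keeps every check primitive recursive.
-/

open Nat.Partrec (Code)
open Nat.Partrec.Code
open Filter Encodable

section Histories

variable {Φ : List ℕ →. Bool × ℕ} {O O' : ℕ →. ℕ} {n m : ℕ} {h h' : List ℕ}

theorem ValidHist.snoc (H : ValidHist Φ O n h) {q v : ℕ} (hq : (false, q) ∈ Φ (n :: h))
    (hv : v ∈ O q) : ValidHist Φ O n (h ++ [v]) := by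
  intro k hk
  rcases Nat.lt_succ_iff_lt_or_eq.mp (by simpa using hk) with hlt | rfl
  · obtain ⟨q', hq', hv'⟩ := H k hlt
    exact ⟨q', by rwa [List.take_append_of_le_length hlt.le],
      by rwa [List.getElem_append_left hlt]⟩
  · exact ⟨q, by rwa [List.take_left' rfl], by simpa using hv⟩

theorem ValidHist.mono (hO : ∀ q v, v ∈ O q → v ∈ O' q) (H : ValidHist Φ O n h) :
    ValidHist Φ O' n h := fun k hk =>
  let ⟨q, hq, hv⟩ := H k hk
  ⟨q, hq, hO _ _ hv⟩

theorem ValidHist.take (H : ValidHist Φ O n h) (j : ℕ) : ValidHist Φ O n (h.take j) := by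
  intro k hk
  have hk' : k < j ∧ k < h.length := by simpa using hk
  obtain ⟨q, hq, hv⟩ := H k hk'.2
  exact ⟨q, by rwa [List.take_take, min_eq_left hk'.1.le], by simpa using hv⟩

theorem ValidHist.take_eq_take (H : ValidHist Φ O n h) (H' : ValidHist Φ O n h') {k : ℕ}
    (hk : k ≤ h.length) (hk' : k ≤ h'.length) : h.take k = h'.take k := by
  induction k with
  | zero => simp
  | succ k ih =>
    have heq := ih (by omega) (by omega)
    obtain ⟨q, hq, hv⟩ := H k (by omega)
    obtain ⟨q', hq', hv'⟩ := H' k (by omega)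
    rw [heq] at hq
    obtain rfl : q = q' := congrArg Prod.snd (Part.mem_unique hq hq')
    rw [List.take_succ_eq_append_getElem (by omega), List.take_succ_eq_append_getElem (by omega),
      heq, Part.mem_unique hv hv']

theorem ValidHist.isPrefix_of_halt (H : ValidHist Φ O n h) (H' : ValidHist Φ O n h')
    (hm : (true, m) ∈ Φ (n :: h')) : h <+: h' := by
  have hle : h.length ≤ h'.length := by
    by_contra! hlt
    obtain ⟨q, hq, -⟩ := H h'.length hlt
    rw [H.take_eq_take H' hlt.le le_rfl, List.take_length] at hq
    simpa using Part.mem_unique hm hq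
  rw [List.prefix_iff_eq_take, ← H.take_eq_take H' le_rfl hle, List.take_length]

theorem HaltsTo.unique_s16 {m' : ℕ} (H : HaltsTo Φ O n m) (H' : HaltsTo Φ O n m') : m = m' := by
  obtain ⟨as, hv, hm⟩ := H
  obtain ⟨as', hv', hm'⟩ := H'
  have hpre := hv.isPrefix_of_halt hv' hm'
  obtain rfl := hpre.eq_of_length (hpre.length_le.antisymm (hv'.isPrefix_of_halt hv hm).length_le)
  exact congrArg Prod.snd (Part.mem_unique hm hm')

/-- A query made along a valid run for a larger oracle `O'` is a query of the halting
`O`-computation, hence answered by `O`. -/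
theorem HaltsTo.dom_of_query (hO : ∀ q v, v ∈ O q → v ∈ O' q) (H : HaltsTo Φ O n m)
    (hh : ValidHist Φ O' n h) {q : ℕ} (hq : (false, q) ∈ Φ (n :: h)) : (O q).Dom := by
  obtain ⟨as, hv, hm⟩ := H
  have hpre := hh.isPrefix_of_halt (hv.mono hO) hm
  have hlt : h.length < as.length := by
    refine hpre.length_le.lt_of_ne fun hlen => ?_
    rw [hpre.eq_of_length hlen] at hq
    simpa using Part.mem_unique hm hq
  obtain ⟨q', hq', hv'⟩ := hv h.length hlt
  rw [← List.prefix_iff_eq_take.mp hpre] at hq'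
  obtain rfl : q' = q := congrArg Prod.snd (Part.mem_unique hq' hq)
  exact Part.dom_iff_mem.mpr ⟨_, hv'⟩

end Histories

section OraclePrefix

def oraclePrefix (X : ℕ → ℕ) (L : ℕ) : List ℕ := (List.range L).map X

variable {X : ℕ → ℕ} {L i v : ℕ}

@[simp]
theorem length_oraclePrefix : (oraclePrefix X L).length = L := by simp [oraclePrefix]

theorem oraclePrefix_take {k : ℕ} (hk : k ≤ L) : (oraclePrefix X L).take k = oraclePrefix X k := by
  rw [oraclePrefix, ← List.map_take, List.take_range, min_eq_left hk, oraclePrefix]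

theorem oraclePrefix_getElem?_of_lt (h : i < L) : (oraclePrefix X L)[i]? = some (X i) := by
  simp [oraclePrefix, h]

theorem eq_of_oraclePrefix_getElem? (h : (oraclePrefix X L)[i]? = some v) : v = X i := by
  rw [oraclePrefix, List.getElem?_map] at h
  grind

theorem eventually_oraclePrefix_getElem? (i : ℕ) :
    ∀ᶠ L in atTop, (oraclePrefix X L)[i]? = some (X i) :=
  (eventually_gt_atTop i).mono fun _ => oraclePrefix_getElem?_of_lt

variable {Y e : ℕ → ℕ} {q : ℕ}

theorem mem_of_oraclePrefix_getElem? (he : ∀ q, Y (e q) = X q)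
    (h : (oraclePrefix Y L)[e q]? = some v) : v ∈ (X : ℕ →. ℕ) q := by
  simp [← he, eq_of_oraclePrefix_getElem? h]

theorem eventually_oraclePrefix_getElem?_of_mem (he : ∀ q, Y (e q) = X q)
    (h : v ∈ (X : ℕ →. ℕ) q) : ∀ᶠ L in atTop, (oraclePrefix Y L)[e q]? = some v := by
  obtain rfl : v = X q := by simpa using h
  simpa [he] using eventually_oraclePrefix_getElem? (X := Y) (e q)

end OraclePrefix

section PrefixMachine

/-- The machine that reads its oracle at `0, 1, 2, …` and halts with `m` as soon as
`chk n` returns `some m` on the values read so far. -/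
def prefixMachine (chk : ℕ → List ℕ → Option ℕ) : List ℕ →. Bool × ℕ := fun l =>
  Part.some ((chk l.headI l.tail).elim (false, l.tail.length) (true, ·))

variable {chk : ℕ → List ℕ → Option ℕ} {X : ℕ → ℕ} {n m : ℕ}

theorem prefixMachine_partrec (h : Computable₂ chk) : Partrec (prefixMachine chk) := by
  refine Computable.partrec ?_
  exact (Computable.option_casesOn (h.comp Primrec.list_headI.to_comp Primrec.list_tail.to_comp)
    ((Computable.const false).pair (Computable.list_length.comp Primrec.list_tail.to_comp))
    ((Computable.const true).pair Computable.snd).to₂).of_eq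
      fun l => by cases chk l.headI l.tail <;> rfl

theorem mem_prefixMachine_cons {as : List ℕ} {x : Bool × ℕ} :
    x ∈ prefixMachine chk (n :: as) ↔ x = (chk n as).elim (false, as.length) (true, ·) :=
  Part.mem_some_iff

theorem ValidHist.eq_oraclePrefix {as : List ℕ}
    (H : ValidHist (prefixMachine chk) (X : ℕ →. ℕ) n as) :
    as = oraclePrefix X as.length := by
  refine List.ext_getElem (by simp) fun k hk _ => ?_
  obtain ⟨q, hq, hv⟩ := H k hk
  rw [mem_prefixMachine_cons] at hq
  obtain rfl : q = k := by
    cases hc : chk n (as.take k) <;> simp [hc] at hq; omega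
  simpa [oraclePrefix] using hv

theorem exists_of_prefixMachine_haltsTo (H : HaltsTo (prefixMachine chk) (X : ℕ →. ℕ) n m) :
    ∃ L, chk n (oraclePrefix X L) = some m := by
  obtain ⟨as, hv, hm⟩ := H
  refine ⟨as.length, ?_⟩
  rw [mem_prefixMachine_cons] at hm
  rw [← hv.eq_oraclePrefix]
  cases hc : chk n as <;> simp_all

theorem exists_prefixMachine_haltsTo {L : ℕ} (h : chk n (oraclePrefix X L) = some m) :
    ∃ m', HaltsTo (prefixMachine chk) (X : ℕ →. ℕ) n m' := by
  have hex : ∃ L, (chk n (oraclePrefix X L)).isSome := ⟨L, by simp [h]⟩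
  obtain ⟨m', hm'⟩ := Option.isSome_iff_exists.mp (Nat.find_spec hex)
  refine ⟨m', oraclePrefix X (Nat.find hex), fun k hk => ⟨k, ?_, ?_⟩, ?_⟩
  · have hk' : k < Nat.find hex := by simpa using hk
    have hnone := Option.not_isSome_iff_eq_none.mp (Nat.find_min hex hk')
    rw [mem_prefixMachine_cons, oraclePrefix_take hk'.le, hnone]
    simp
  · simp [oraclePrefix]
  · rw [mem_prefixMachine_cons, hm']
    rfl

theorem reIn_of_primrecRel {P : ℕ → List ℕ → Prop} (hP : PrimrecRel P) {S : Set ℕ}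
    (hS : ∀ n, n ∈ S ↔ ∃ L, P n (oraclePrefix X L)) : REIn X S := by
  let chk : ℕ → List ℕ → Option ℕ := fun n l => if P n l then some 0 else none
  have hchk : Computable₂ chk :=
    (Primrec.ite hP (Primrec.const (some 0)) (Primrec.const none)).to_comp
  refine ⟨prefixMachine chk, prefixMachine_partrec hchk, fun n => (hS n).trans ⟨?_, ?_⟩⟩
  · rintro ⟨L, hL⟩
    exact exists_prefixMachine_haltsTo (L := L) (m := 0) (if_pos hL)
  · rintro ⟨m, hm⟩
    obtain ⟨L, hL⟩ := exists_of_prefixMachine_haltsTo hm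
    exact ⟨L, of_not_not fun hP => by simp [chk, hP] at hL⟩

theorem subTuringLE_of_computable₂ {g : ℕ →. ℕ} (hchk : Computable₂ chk)
    (hcomplete : ∀ n m, m ∈ g n → ∃ L, chk n (oraclePrefix X L) = some m)
    (hsound : ∀ n m L m', m ∈ g n → chk n (oraclePrefix X L) = some m' → m' = m) :
    SubTuringLE g (X : ℕ →. ℕ) := by
  refine ⟨prefixMachine chk, prefixMachine_partrec hchk, fun n m hm => ?_⟩
  obtain ⟨L, hL⟩ := hcomplete n m hm
  obtain ⟨m', H⟩ := exists_prefixMachine_haltsTo hL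
  obtain ⟨L', hL'⟩ := exists_of_prefixMachine_haltsTo H
  rwa [← hsound n m L' m' hm hL']

end PrefixMachine

section BoundedEval

def Computes (c : Code) (Φ : List ℕ →. Bool × ℕ) : Prop :=
  ∀ l, eval c (encode l) = (Φ l).map encode

theorem Partrec.exists_computes {Φ : List ℕ →. Bool × ℕ} (hΦ : Partrec Φ) :
    ∃ c, Computes c Φ := by
  obtain ⟨c, hc⟩ := Nat.Partrec.Code.exists_code.mp hΦ
  exact ⟨c, fun l => by simp [hc]⟩

def boundedEval (c : Code) (s : ℕ) (l : List ℕ) : Option (Bool × ℕ) :=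
  (evaln s c (encode l)).bind decode

variable {Φ : List ℕ →. Bool × ℕ} {c : Code} {l : List ℕ} {x : Bool × ℕ}

theorem Computes.mem_of_boundedEval (hc : Computes c Φ) {s : ℕ}
    (h : boundedEval c s l = some x) : x ∈ Φ l := by
  obtain ⟨r, hr, hdec⟩ := Option.bind_eq_some_iff.mp h
  have hev := evaln_sound hr
  rw [hc, Part.mem_map_iff] at hev
  obtain ⟨y, hy, rfl⟩ := hev
  rw [encodek] at hdec
  exact Option.some_injective _ hdec ▸ hy

theorem Computes.eventually_boundedEval (hc : Computes c Φ) (h : x ∈ Φ l) :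
    ∀ᶠ s in atTop, boundedEval c s l = some x := by
  obtain ⟨k, hk⟩ := evaln_complete.mp (hc l ▸ Part.mem_map encode h)
  filter_upwards [eventually_ge_atTop k] with s hs
  rw [boundedEval, Option.mem_def.mp (evaln_mono hs hk), Option.bind_some, encodek]

theorem primrec_boundedEval (c : Code) : Primrec₂ (boundedEval c) :=
  Primrec.option_bind
    (primrec_evaln.comp ((Primrec.fst.pair (Primrec.const c)).pair
      (Primrec.encode.comp Primrec.snd)))
    (Primrec.decode.comp Primrec.snd).to₂

end BoundedEval

section Simulation

/-- A simulation state is the output (`inl`) or the history so far (`inr`); `s` is the fuel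
given to the bounded evaluation of each round. -/
def runStep (c : Code) (s : ℕ) (ans : ℕ → Option ℕ) (n : ℕ) :
    ℕ ⊕ List ℕ → Option (ℕ ⊕ List ℕ)
  | .inl m => some (.inl m)
  | .inr h => (boundedEval c s (n :: h)).bind fun r =>
      bif r.1 then some (.inl r.2) else (ans r.2).map fun v => .inr (h ++ [v])

def run (c : Code) (s : ℕ) (ans : ℕ → Option ℕ) (n : ℕ) : ℕ → Option (ℕ ⊕ List ℕ)
  | 0 => some (.inr [])
  | j + 1 => (run c s ans n j).bind (runStep c s ans n)

variable {Φ : List ℕ →. Bool × ℕ} {c : Code} {O : ℕ →. ℕ} {n m s : ℕ}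

section Soundness

variable {ans : ℕ → Option ℕ}

theorem runStep_sound (hc : Computes c Φ) (hans : ∀ q v, ans q = some v → v ∈ O q)
    {r r' : ℕ ⊕ List ℕ} (hr : Sum.elim (HaltsTo Φ O n) (ValidHist Φ O n) r)
    (hr' : runStep c s ans n r = some r') : Sum.elim (HaltsTo Φ O n) (ValidHist Φ O n) r' := by
  rcases r with m | h
  · cases hr'
    exact hr
  · obtain ⟨⟨b, q⟩, hq, hr'⟩ := Option.bind_eq_some_iff.mp hr'
    have hmem := hc.mem_of_boundedEval hq
    cases b
    · obtain ⟨v, hv, rfl⟩ := Option.map_eq_some_iff.mp hr'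
      exact hr.snoc hmem (hans q v hv)
    · cases hr'
      exact ⟨h, hr, hmem⟩

theorem run_sound (hc : Computes c Φ) (hans : ∀ q v, ans q = some v → v ∈ O q) :
    ∀ {j r}, run c s ans n j = some r → Sum.elim (HaltsTo Φ O n) (ValidHist Φ O n) r
  | 0, _, hr => by
    cases hr
    exact fun k hk => absurd hk (by simp)
  | _ + 1, _, hr => by
    obtain ⟨r, hr, hr'⟩ := Option.bind_eq_some_iff.mp hr
    exact runStep_sound hc hans (run_sound hc hans hr) hr'

theorem run_eq_inl_of_le {j k : ℕ} (h : run c s ans n j = some (.inl m)) (hjk : j ≤ k) :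
    run c s ans n k = some (.inl m) := by
  induction hjk with
  | refl => exact h
  | step _ ih => simp [run, ih, runStep]

end Soundness

section Completeness

-- `L` serves at once as the fuel, as the length of the oracle prefix behind `ans L`, and in
-- `eventually_run_eq_inl` as the number of rounds.

variable {ans : ℕ → ℕ → Option ℕ}

theorem eventually_run_eq_inr (hc : Computes c Φ)
    (hans : ∀ q v, v ∈ O q → ∀ᶠ L in atTop, ans L q = some v) {h : List ℕ}
    (hh : ValidHist Φ O n h) : ∀ᶠ L in atTop, run c L (ans L) n h.length = some (.inr h) := by
  suffices ∀ k ≤ h.length, ∀ᶠ L in atTop, run c L (ans L) n k = some (.inr (h.take k)) by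
    simpa using this h.length le_rfl
  intro k hk
  induction k with
  | zero => simp [run]
  | succ k ih =>
    obtain ⟨q, hq, hv⟩ := hh k hk
    filter_upwards [ih (by omega), hc.eventually_boundedEval hq, hans q _ hv]
      with L hrun hev hL
    rw [List.take_succ_eq_append_getElem hk]
    simp [run, hrun, runStep, hev, hL]

theorem eventually_run_eq_inl (hc : Computes c Φ)
    (hans : ∀ q v, v ∈ O q → ∀ᶠ L in atTop, ans L q = some v) (H : HaltsTo Φ O n m) :
    ∀ᶠ L in atTop, run c L (ans L) n L = some (.inl m) := by
  obtain ⟨h, hh, hm⟩ := H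
  filter_upwards [eventually_run_eq_inr hc hans hh, hc.eventually_boundedEval hm,
    eventually_gt_atTop h.length] with L hrun hev hL
  exact run_eq_inl_of_le (by simp [run, hrun, runStep, hev]) hL

end Completeness

open Primrec in
theorem primrec_run (c : Code) {σ : Type*} [Primcodable σ] {s n j : σ → ℕ}
    {ans : σ → ℕ → Option ℕ} (hs : Primrec s) (hans : Primrec₂ ans) (hn : Primrec n)
    (hj : Primrec j) : Primrec fun p => run c (s p) (ans p) (n p) (j p) := by
  have hquery : Primrec₂ fun (x : σ × (ℕ ⊕ List ℕ)) (h : List ℕ) =>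
      (boundedEval c (s x.1) (n x.1 :: h)).bind fun r =>
        bif r.1 then some (Sum.inl r.2) else (ans x.1 r.2).map fun v => Sum.inr (h ++ [v]) :=
    option_bind ((primrec_boundedEval c).comp (hs.comp (fst.comp fst))
        (list_cons.comp (hn.comp (fst.comp fst)) snd))
      (cond (fst.comp snd) (option_some.comp (sumInl.comp (snd.comp snd)))
        (option_map (hans.comp (fst.comp (fst.comp fst)) (snd.comp snd))
          (sumInr.comp (list_append.comp (snd.comp (fst.comp fst))
            (list_cons.comp snd (const [])))).to₂)).to₂
  have hstep : Primrec₂ fun (p : σ) (r : ℕ ⊕ List ℕ) => runStep c (s p) (ans p) (n p) r :=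
    (sumCasesOn snd (option_some.comp (sumInl.comp snd)).to₂ hquery).of_eq
      fun x => by rcases x.2 <;> rfl
  refine (nat_rec' hj (const (some (.inr []))) (option_bind (snd.comp snd)
    (hstep.comp (fst.comp fst) snd).to₂).to₂).of_eq fun p => ?_
  induction j p <;> simp_all [run]

end Simulation

section Joins

variable {X Y f β : ℕ → ℕ} {A : Set ℕ} {q v : ℕ}

theorem totalJoin_two_mul (q : ℕ) : totalJoin X Y (2 * q) = X q := by
  simp [totalJoin]

/-- Where `(f ⊕ β)(q)` sits inside `α ⊕ (β ⊕ f)`. -/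
def joinIndex (q : ℕ) : ℕ := if q % 2 = 0 then 4 * (q / 2) + 3 else 4 * (q / 2) + 1

theorem totalJoin_joinIndex (α : ℕ → ℕ) (q : ℕ) :
    totalJoin α (totalJoin β f) (joinIndex q) = totalJoin f β q := by
  unfold joinIndex totalJoin
  split_ifs <;> first | omega | (congr 1; omega)

theorem primrec_joinIndex : Primrec joinIndex :=
  have hhalf : Primrec fun q : ℕ => 4 * (q / 2) :=
    Primrec.nat_mul.comp (Primrec.const 4) (Primrec.nat_div.comp Primrec.id (Primrec.const 2))
  Primrec.ite (PrimrecRel.comp Primrec.eq (Primrec.nat_mod.comp Primrec.id (Primrec.const 2))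
      (Primrec.const 0))
    (Primrec.nat_add.comp hhalf (Primrec.const 3)) (Primrec.nat_add.comp hhalf (Primrec.const 1))

theorem mem_pJoin_restrictTo_iff :
    v ∈ PJoin (restrictTo (f : ℕ →. ℕ) A) (β : ℕ →. ℕ) q ↔
      (q % 2 = 0 → q / 2 ∈ A) ∧ v = totalJoin f β q := by
  unfold PJoin restrictTo totalJoin
  split_ifs <;> simp_all [eq_comm]

theorem mem_totalJoin_of_mem_pJoin_restrictTo
    (h : v ∈ PJoin (restrictTo (f : ℕ →. ℕ) A) (β : ℕ →. ℕ) q) :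
    v ∈ (totalJoin f β : ℕ →. ℕ) q := by
  simpa using (mem_pJoin_restrictTo_iff.mp h).2

end Joins

section QueriedArgs

/-- The arguments of `f` (the even positions of `f ⊕ β`) queried by `Φ` with oracle `f ⊕ β`
on inputs in the domain of `g`. -/
def queriedArgs (Φ : List ℕ →. Bool × ℕ) (g : ℕ →. ℕ) (f β : ℕ → ℕ) : Set ℕ :=
  {i | ∃ n ∈ g.Dom, ∃ h, ValidHist Φ (totalJoin f β : ℕ →. ℕ) n h ∧
    (false, 2 * i) ∈ Φ (n :: h)}

variable {Φ : List ℕ →. Bool × ℕ} {g : ℕ →. ℕ} {f β : ℕ → ℕ} {A : Set ℕ}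

theorem queriedArgs_subset
    (hred : ∀ n m, m ∈ g n → HaltsTo Φ (PJoin (restrictTo (f : ℕ →. ℕ) A) (β : ℕ →. ℕ)) n m) :
    queriedArgs Φ g f β ⊆ A := by
  rintro i ⟨n, hn, h, hh, hq⟩
  obtain ⟨m, hm⟩ := Part.dom_iff_mem.mp hn
  obtain ⟨v, hv⟩ := Part.dom_iff_mem.mp <| (hred n m hm).dom_of_query
    (fun _ _ => mem_totalJoin_of_mem_pJoin_restrictTo) hh hq
  simpa using (mem_pJoin_restrictTo_iff.mp hv).1

theorem haltsTo_restrict_queriedArgs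
    (hred : ∀ n m, m ∈ g n → HaltsTo Φ (PJoin (restrictTo (f : ℕ →. ℕ) A) (β : ℕ →. ℕ)) n m)
    {n m : ℕ} (hm : m ∈ g n) :
    HaltsTo Φ (PJoin (restrictTo (f : ℕ →. ℕ) (queriedArgs Φ g f β)) (β : ℕ →. ℕ)) n m := by
  obtain ⟨as, hv, hhalt⟩ := hred n m hm
  refine ⟨as, fun k hk => ?_, hhalt⟩
  obtain ⟨q, hq, hval⟩ := hv k hk
  have hqueried : q % 2 = 0 → q / 2 ∈ queriedArgs Φ g f β := fun heven =>
    ⟨n, Part.dom_iff_mem.mpr ⟨m, hm⟩, as.take k,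
      (hv.take k).mono fun _ _ => mem_totalJoin_of_mem_pJoin_restrictTo,
      by rwa [Nat.mul_div_cancel' (Nat.dvd_of_mod_eq_zero heven)]⟩
  exact ⟨q, hq, mem_pJoin_restrictTo_iff.mpr ⟨hqueried, (mem_pJoin_restrictTo_iff.mp hval).2⟩⟩

end QueriedArgs

section Enumeration

theorem Primrec.sum_getLeft {α β : Type*} [Primcodable α] [Primcodable β] :
    Primrec (Sum.getLeft? : α ⊕ β → Option α) :=
  (Primrec.sumCasesOn Primrec.id (Primrec.option_some.comp Primrec.snd).to₂
    (Primrec.const none).to₂).of_eq fun x => by cases x <;> rfl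

theorem Primrec.sum_getRight {α β : Type*} [Primcodable α] [Primcodable β] :
    Primrec (Sum.getRight? : α ⊕ β → Option β) :=
  (Primrec.sumCasesOn Primrec.id (Primrec.const none).to₂
    (Primrec.option_some.comp Primrec.snd).to₂).of_eq fun x => by cases x <;> rfl

/-- A certificate, readable off the prefix `as` of `α ⊕ (β ⊕ f)`, that `i` is a queried argument:
`t` codes an input `n`, on which the domain machine `cd` halts, and a round `j` at which the
machine `cφ` queries `f` at `i`. -/
def QueryWitness (cφ cd : Code) (i : ℕ) (as : List ℕ) (t : ℕ) : Prop :=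
  ((run cd as.length (fun q => as[2 * q]?) t.unpair.1 as.length).bind Sum.getLeft?).isSome ∧
    ((run cφ as.length (fun q => as[joinIndex q]?) t.unpair.1 t.unpair.2).bind
      Sum.getRight?).bind (fun h => boundedEval cφ as.length (t.unpair.1 :: h)) =
      some (false, 2 * i)

open Primrec in
theorem primrecRel_exists_queryWitness (cφ cd : Code) :
    PrimrecRel fun i as => ∃ t < as.length, QueryWitness cφ cd i as t := by
  have has : Primrec fun x : ℕ × ℕ × List ℕ => x.2.2 := snd.comp snd
  have hlen : Primrec fun x : ℕ × ℕ × List ℕ => x.2.2.length := list_length.comp has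
  have hn : Primrec fun x : ℕ × ℕ × List ℕ => x.1.unpair.1 := fst.comp (unpair.comp fst)
  have hhalts : PrimrecPred fun x : ℕ × ℕ × List ℕ =>
      ((run cd x.2.2.length (fun q => x.2.2[2 * q]?) x.1.unpair.1 x.2.2.length).bind
        Sum.getLeft?).isSome = true :=
    PrimrecRel.comp Primrec.eq (option_isSome.comp (option_bind
      (primrec_run cd hlen (list_getElem?.comp (has.comp fst)
        (nat_mul.comp (const 2) snd)).to₂ hn hlen)
      (Primrec.sum_getLeft.comp snd).to₂)) (const true)
  have hquery : PrimrecPred fun x : ℕ × ℕ × List ℕ =>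
      ((run cφ x.2.2.length (fun q => x.2.2[joinIndex q]?) x.1.unpair.1 x.1.unpair.2).bind
        Sum.getRight?).bind (fun h => boundedEval cφ x.2.2.length (x.1.unpair.1 :: h)) =
        some (false, 2 * x.2.1) :=
    PrimrecRel.comp Primrec.eq
      (option_bind (option_bind
        (primrec_run cφ hlen (list_getElem?.comp (has.comp fst) (primrec_joinIndex.comp snd)).to₂ hn
          (snd.comp (unpair.comp fst)))
        (Primrec.sum_getRight.comp snd).to₂)
        ((primrec_boundedEval cφ).comp (hlen.comp fst) (list_cons.comp (hn.comp fst) snd)).to₂)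
      (option_some.comp ((const false).pair (nat_mul.comp (const 2) (fst.comp snd))))
  have hwit : PrimrecRel fun (t : ℕ) (y : ℕ × List ℕ) => QueryWitness cφ cd y.1 y.2 t :=
    hhalts.and hquery
  exact (hwit.exists_mem_list.comp (list_range.comp (list_length.comp snd)) Primrec.id).of_eq
    fun _ => by simp

theorem reIn_queriedArgs {α β f : ℕ → ℕ} {Φ : List ℕ →. Bool × ℕ} {g : ℕ →. ℕ}
    (hΦ : Partrec Φ) (hdom : REIn α g.Dom) :
    REIn (totalJoin α (totalJoin β f)) (queriedArgs Φ g f β) := by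
  obtain ⟨cφ, hcφ⟩ := hΦ.exists_computes
  obtain ⟨Φd, hΦd, hds⟩ := hdom
  obtain ⟨cd, hcd⟩ := hΦd.exists_computes
  have hα : ∀ q, totalJoin α (totalJoin β f) (2 * q) = α q := totalJoin_two_mul
  have hfβ : ∀ q, totalJoin α (totalJoin β f) (joinIndex q) = totalJoin f β q :=
    totalJoin_joinIndex α
  refine reIn_of_primrecRel (primrecRel_exists_queryWitness cφ cd) fun i => ⟨?_, ?_⟩
  · rintro ⟨n, hn, h, hh, hq⟩
    obtain ⟨m, hm⟩ := (hds n).mp hn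
    have hd := eventually_run_eq_inl hcd (fun _ _ => eventually_oraclePrefix_getElem?_of_mem hα) hm
    have hrun :=
      eventually_run_eq_inr hcφ (fun _ _ => eventually_oraclePrefix_getElem?_of_mem hfβ) hh
    obtain ⟨L, hd, hrun, hev, hL⟩ := (hd.and <| hrun.and <| (hcφ.eventually_boundedEval hq).and
      (eventually_gt_atTop (Nat.pair n h.length))).exists
    exact ⟨L, Nat.pair n h.length, by simpa using hL, by simp [hd], by simp [hrun, hev]⟩
  · rintro ⟨L, t, -, hd, hq⟩
    simp only [length_oraclePrefix, Option.isSome_iff_exists, Option.bind_eq_some_iff,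
      Sum.getLeft?_eq_some_iff, Sum.getRight?_eq_some_iff] at hd hq
    obtain ⟨m, _, hrun, rfl⟩ := hd
    obtain ⟨_, ⟨_, hrun', rfl⟩, hev⟩ := hq
    exact ⟨t.unpair.1, (hds _).mpr ⟨m,
      run_sound hcd (fun _ _ => mem_of_oraclePrefix_getElem? hα) hrun⟩, _,
      run_sound hcφ (fun _ _ => mem_of_oraclePrefix_getElem? hfβ) hrun',
      hcφ.mem_of_boundedEval hev⟩

end Enumeration

section Hardwiring

theorem List.lookup_map_graph_eq_some_iff {α β : Type*} [BEq α] [LawfulBEq α] {l : List α}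
    {F : α → β} {a : α} {v : β} :
    (l.map fun x => (x, F x)).lookup a = some v ↔ a ∈ l ∧ F a = v := by
  induction l with grind

def hardwiredAns (tbl : List (ℕ × ℕ)) (bs : List ℕ) (q : ℕ) : Option ℕ :=
  if q % 2 = 0 then tbl.lookup (q / 2) else bs[q / 2]?

variable {f β : ℕ → ℕ} {F : Set ℕ} {q v : ℕ}

theorem mem_of_hardwiredAns (hF : F.Finite) {L : ℕ}
    (h : hardwiredAns (hF.toFinset.toList.map fun i => (i, f i)) (oraclePrefix β L) q = some v) :
    v ∈ PJoin (restrictTo (f : ℕ →. ℕ) F) (β : ℕ →. ℕ) q := by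
  rw [mem_pJoin_restrictTo_iff]
  unfold hardwiredAns at h
  unfold totalJoin
  split_ifs at h ⊢ with hq
  · obtain ⟨hmem, rfl⟩ := List.lookup_map_graph_eq_some_iff.mp h
    exact ⟨fun _ => hF.mem_toFinset.mp (Finset.mem_toList.mp hmem), rfl⟩
  · exact ⟨fun h' => absurd h' hq, eq_of_oraclePrefix_getElem? h⟩

theorem eventually_hardwiredAns (hF : F.Finite)
    (h : v ∈ PJoin (restrictTo (f : ℕ →. ℕ) F) (β : ℕ →. ℕ) q) :
    ∀ᶠ L in atTop,
      hardwiredAns (hF.toFinset.toList.map fun i => (i, f i)) (oraclePrefix β L) q = some v := by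
  rw [mem_pJoin_restrictTo_iff] at h
  obtain ⟨hF', rfl⟩ := h
  unfold hardwiredAns totalJoin
  split_ifs with hq
  · exact .of_forall fun _ => by simp [List.lookup_map_graph_eq_some_iff, hF' hq]
  · exact eventually_oraclePrefix_getElem? _

theorem primrec_hardwiredAns (tbl : List (ℕ × ℕ)) : Primrec₂ (hardwiredAns tbl) :=
  have hhalf : Primrec fun p : List ℕ × ℕ => p.2 / 2 :=
    Primrec.nat_div.comp Primrec.snd (Primrec.const 2)
  Primrec.ite (PrimrecRel.comp Primrec.eq (Primrec.nat_mod.comp Primrec.snd (Primrec.const 2))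
      (Primrec.const 0))
    (Primrec.listLookup.comp hhalf (Primrec.const tbl))
    (Primrec.list_getElem?.comp Primrec.fst hhalf)

theorem SubTuringLE.of_finite_restrictTo {g : ℕ →. ℕ} (hF : F.Finite)
    (hle : SubTuringLE g (PJoin (restrictTo (f : ℕ →. ℕ) F) (β : ℕ →. ℕ))) :
    SubTuringLE g (β : ℕ →. ℕ) := by
  obtain ⟨Φ, hΦ, hred⟩ := hle
  obtain ⟨c, hc⟩ := hΦ.exists_computes
  let tbl := hF.toFinset.toList.map fun i => (i, f i)
  refine subTuringLE_of_computable₂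
    (chk := fun n bs => (run c bs.length (hardwiredAns tbl bs) n bs.length).bind Sum.getLeft?)
    ?_ (fun n m hm => ?_) (fun n m L m' hm h => ?_)
  · have hlen : Primrec fun p : ℕ × List ℕ => p.2.length :=
      Primrec.list_length.comp Primrec.snd
    exact (Primrec.option_bind (primrec_run c hlen
      ((primrec_hardwiredAns tbl).comp (Primrec.snd.comp Primrec.fst) Primrec.snd).to₂
      Primrec.fst hlen) (Primrec.sum_getLeft.comp Primrec.snd).to₂).to_comp
  · obtain ⟨L, hL⟩ :=
      (eventually_run_eq_inl hc (fun _ _ => eventually_hardwiredAns hF) (hred n m hm)).exists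
    exact ⟨L, by simp [tbl, hL]⟩
  · simp only [length_oraclePrefix, Option.bind_eq_some_iff, Sum.getLeft?_eq_some_iff] at h
    obtain ⟨_, hrun, rfl⟩ := h
    exact (run_sound hc (fun _ _ => mem_of_hardwiredAns hF) hrun).unique_s16 (hred n m hm)

end Hardwiring

theorem anti_cupping (α β f : ℕ → ℕ) (A : Set ℕ)
    (hA : ImmuneIn (totalJoin α (totalJoin β f)) A)
    (g : ℕ →. ℕ) (hdom : REIn α g.Dom)
    (hle : SubTuringLE g (PJoin (restrictTo (f : ℕ →. ℕ) A) (β : ℕ →. ℕ))) :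
    SubTuringLE g (β : ℕ →. ℕ) := by
  obtain ⟨Φ, hΦ, hred⟩ := hle
  have hfin : (queriedArgs Φ g f β).Finite :=
    hA _ (reIn_queriedArgs hΦ hdom) (queriedArgs_subset hred)
  exact SubTuringLE.of_finite_restrictTo hfin
    ⟨Φ, hΦ, fun _ _ hm => haltsTo_restrict_queriedArgs hred hm⟩
end
end
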